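/- arXiv:2303.02656 — 11 statements merged into one kernel-verified Lean document; each statement's English description precedes it below -/
import Mathlib

section
/- Every σ-pseudocompact Tychonoff space is projectively Hurewicz. -/
open Set Filter Topology

/-- A family is a γ-cover: it is infinite and every point belongs to all but
finitely many members. -/
def IsGammaCover {X : Type*} (𝒰 : Set (Set X)) : Prop :=
  𝒰.Infinite ∧ ∀ x : X, {V ∈ 𝒰 | x ∉ V}.Finite

/-- The Hurewicz property `U_fin(𝒪, Γ)`. -/
def Hurewicz (Y : Type*) [TopologicalSpace Y] : Prop :=
  ∀ 𝒰 : ℕ → Set (Set Y),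
    (∀ n, (∀ V ∈ 𝒰 n, IsOpen V) ∧ ⋃₀ 𝒰 n = Set.univ) →
    ∃ 𝒱 : ℕ → Set (Set Y), (∀ n, 𝒱 n ⊆ 𝒰 n ∧ (𝒱 n).Finite) ∧
      ∀ y : Y, ∀ᶠ n in Filter.atTop, y ∈ ⋃₀ 𝒱 n

/-- A space is projectively Hurewicz if every separable metrizable continuous
image of it is Hurewicz. -/
def ProjHurewicz (X : Type*) [TopologicalSpace X] : Prop :=
  ∀ (Y : Type) [TopologicalSpace Y],
    TopologicalSpace.MetrizableSpace Y → TopologicalSpace.SeparableSpace Y →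
    ∀ f : X → Y, Continuous f → Function.Surjective f → Hurewicz Y

/-- A zero-set: the preimage of `{0}` of a continuous real-valued function. -/
def IsZeroSet {X : Type*} [TopologicalSpace X] (F : Set X) : Prop :=
  ∃ f : X → ℝ, Continuous f ∧ F = f ⁻¹' {0}

/-- A cozero set: the complement of a zero-set. -/
def IsCozero {X : Type*} [TopologicalSpace X] (U : Set X) : Prop :=
  ∃ f : X → ℝ, Continuous f ∧ U = f ⁻¹' {0}ᶜ

/-- A (countable) cozero γ-cover which is γ_F-shrinkable: it admits a
γ-cover by zero-sets shrinking it. -/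
def GammaFShrinkable {X : Type*} [TopologicalSpace X] (𝒰 : Set (Set X)) : Prop :=
  𝒰.Countable ∧ (∀ V ∈ 𝒰, IsCozero V) ∧ IsGammaCover 𝒰 ∧
    ∃ F : Set X → Set X, (∀ V ∈ 𝒰, IsZeroSet (F V) ∧ F V ⊆ V) ∧
      (F '' 𝒰).Infinite ∧ ∀ x : X, {V ∈ 𝒰 | x ∉ F V}.Finite

/-- An ω-groupable open cover: an open cover admitting a partition into finite
parts such that every finite set is contained in a member of all but finitely
many parts. -/
def OmegaGroupable {X : Type*} [TopologicalSpace X] (𝒲 : Set (Set X)) : Prop :=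
  (∀ V ∈ 𝒲, IsOpen V) ∧ ⋃₀ 𝒲 = Set.univ ∧
    ∃ P : ℕ → Set (Set X), (∀ n, (P n).Finite ∧ (P n).Nonempty) ∧
      (⋃ n, P n) = 𝒲 ∧ (∀ m n, m ≠ n → Disjoint (P m) (P n)) ∧
      ∀ F : Set X, F.Finite → ∀ᶠ n in Filter.atTop, ∃ U ∈ P n, F ⊆ U

/-- `C_p(X)`: continuous real-valued functions with the topology of pointwise
convergence (subspace of the product `X → ℝ`). -/
abbrev Cp (X : Type*) [TopologicalSpace X] : Type _ :=
  {f : X → ℝ // Continuous f}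

/-- The constant zero function in `C_p(X)`. -/
def zeroCp (X : Type*) [TopologicalSpace X] : Cp X :=
  ⟨fun _ => 0, continuous_const⟩

/-- `A ∈ Γ_g`: `A` is infinite, `g ∉ A` and `A` converges to `g`. -/
def GammaAt {X : Type*} [TopologicalSpace X] (g : Cp X) (A : Set (Cp X)) : Prop :=
  A.Infinite ∧ g ∉ A ∧ ∀ W ∈ 𝓝 g, (A \ W).Finite

/-- `B ∈ wΓ_g`: `B` admits a partition into finite parts weakly converging
to `g`. -/
def WGammaAt {X : Type*} [TopologicalSpace X] (g : Cp X) (B : Set (Cp X)) : Prop :=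
  ∃ S : ℕ → Set (Cp X), (∀ n, (S n).Finite ∧ (S n).Nonempty) ∧
    (⋃ n, S n) = B ∧ (∀ m n, m ≠ n → Disjoint (S m) (S n)) ∧
    ∀ W ∈ 𝓝 g, ∃ s : ℕ → Cp X, (∀ n, s n ∈ S n) ∧ ∀ᶠ n in Filter.atTop, s n ∈ W

/-- The selection principle `S_fin(Γ_g, wΓ_g)` for `C_p(X)` at the point `g`. -/
def SfinGammaWGamma {X : Type*} [TopologicalSpace X] (g : Cp X) : Prop :=
  ∀ A : ℕ → Set (Cp X), (∀ n, GammaAt g (A n)) →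
    ∃ B : ℕ → Set (Cp X), (∀ n, B n ⊆ A n ∧ (B n).Finite) ∧ WGammaAt g (⋃ n, B n)

/-- The selection principle `S_fin(Γ_F, Ω^gr)` for a space `X`. -/
def SfinGammaFOmegaGr (X : Type*) [TopologicalSpace X] : Prop :=
  ∀ 𝒰 : ℕ → Set (Set X), (∀ n, GammaFShrinkable (𝒰 n)) →
    ∃ 𝒱 : ℕ → Set (Set X), (∀ n, 𝒱 n ⊆ 𝒰 n ∧ (𝒱 n).Finite) ∧
      OmegaGroupable (⋃ n, 𝒱 n)
/-- A subset is pseudocompact if every continuous real-valued function on it is bounded. -/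
def PseudocompactSet {X : Type*} [TopologicalSpace X] (A : Set X) : Prop :=
  ∀ f : A → ℝ, Continuous f → ∃ M : ℝ, ∀ a : A, |f a| ≤ M

/-
The continuous image of a pseudocompact set is pseudocompact, and in a metrizable space a
pseudocompact set is compact: otherwise it contains an infinite closed discrete subset, on which
`n ↦ n` extends by Tietze to an unbounded continuous function. Hence every metrizable continuous
image of a σ-pseudocompact space is σ-compact, and a σ-compact space is Hurewicz because one
finite subfamily of the `n`-th cover suffices for the `n`-th compact set of an increasing
exhaustion.
-/

open TopologicalSpace

theorem PseudocompactSet.image {X Y : Type*} [TopologicalSpace X] [TopologicalSpace Y]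
    {A : Set X} (hA : PseudocompactSet A) {f : X → Y} (hf : Continuous f) :
    PseudocompactSet (f '' A) := by
  intro g hg
  let r : A → f '' A := fun a => ⟨f a, a, a.2, rfl⟩
  obtain ⟨M, hM⟩ := hA (g ∘ r) (hg.comp ((hf.comp continuous_subtype_val).subtype_mk _))
  refine ⟨M, ?_⟩
  rintro ⟨_, a, ha, rfl⟩
  exact hM ⟨a, ha⟩

theorem IsClosed.exists_continuous_unbounded_of_infinite {Z : Type*} [TopologicalSpace Z]
    [NormalSpace Z] {B : Set Z} (hB : IsClosed B) [DiscreteTopology B] (hinf : B.Infinite) :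
    ∃ g : Z → ℝ, Continuous g ∧ ∀ M : ℝ, ∃ z, M < |g z| := by
  let e := hinf.natEmbedding
  let g : C(B, ℝ) := ⟨fun b => ((Function.invFun e b : ℕ) : ℝ), continuous_of_discreteTopology⟩
  obtain ⟨G, hG⟩ := g.exists_restrict_eq hB
  have hGe : ∀ k : ℕ, G (e k) = k := fun k => by
    rw [← G.restrict_apply, hG]
    exact congrArg Nat.cast (Function.leftInverse_invFun e.injective k)
  refine ⟨G, G.continuous, fun M => ?_⟩
  obtain ⟨k, hk⟩ := exists_nat_gt M
  exact ⟨e k, by rwa [hGe, Nat.abs_cast]⟩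

theorem countablyCompactSpace_of_forall_bounded {Z : Type*} [TopologicalSpace Z] [T1Space Z]
    [NormalSpace Z] (h : ∀ f : Z → ℝ, Continuous f → ∃ M : ℝ, ∀ z, |f z| ≤ M) :
    CountablyCompactSpace Z := by
  rw [← isCountablyCompact_univ_iff, isCountablyCompact_iff_infinite_subset_has_accPt]
  intro B _ hB
  by_contra! hacc
  have hclosed : IsClosed B := isClosed_iff_accPt.2 fun a ha => (hacc a trivial ha).elim
  have : DiscreteTopology B := discreteTopology_of_noAccPts fun x _ => hacc x trivial
  obtain ⟨g, hg, hunbdd⟩ := hclosed.exists_continuous_unbounded_of_infinite hB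
  obtain ⟨M, hM⟩ := h g hg
  obtain ⟨z, hz⟩ := hunbdd M
  exact (hM z).not_gt hz

theorem PseudocompactSet.isCompact {Y : Type*} [TopologicalSpace Y] [MetrizableSpace Y]
    {S : Set Y} (hS : PseudocompactSet S) : IsCompact S := by
  let _ := metrizableSpaceMetric Y
  have : CountablyCompactSpace S := countablyCompactSpace_of_forall_bounded hS
  exact (isCountablyCompact_iff_countablyCompactSpace.2 this).isSeqCompact.isCompact

theorem SigmaCompactSpace.hurewicz (Y : Type*) [TopologicalSpace Y] [SigmaCompactSpace Y] :
    Hurewicz Y := by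
  intro 𝒰 h𝒰
  have hsubcover : ∀ n, ∃ 𝒱 ⊆ 𝒰 n, 𝒱.Finite ∧ compactCovering Y n ⊆ ⋃₀ 𝒱 := fun n => by
    have hcover : compactCovering Y n ⊆ ⋃ V ∈ 𝒰 n, id V := by
      simp only [id, ← sUnion_eq_biUnion, (h𝒰 n).2, subset_univ]
    simpa only [sUnion_eq_biUnion, id_eq] using
      (isCompact_compactCovering Y n).elim_finite_subcover_image (h𝒰 n).1 hcover
  choose 𝒱 h𝒱𝒰 h𝒱fin h𝒱cover using hsubcover
  refine ⟨𝒱, fun n => ⟨h𝒱𝒰 n, h𝒱fin n⟩, fun y => ?_⟩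
  obtain ⟨m, hm⟩ := exists_mem_compactCovering y
  filter_upwards [eventually_ge_atTop m] with n hn
  exact h𝒱cover n (compactCovering_subset Y hn hm)

theorem sigma_pseudocompact_projHurewicz_general (X : Type*) [TopologicalSpace X]
    (A : ℕ → Set X) (hpc : ∀ n, PseudocompactSet (A n)) (hcov : ⋃ n, A n = Set.univ) :
    ProjHurewicz X := by
  intro Y _ _ _ f hf hsurj
  have : SigmaCompactSpace Y :=
    ⟨⟨fun n => f '' A n, fun n => ((hpc n).image hf).isCompact, by
      rw [← image_iUnion, hcov, image_univ, hsurj.range_eq]⟩⟩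
  exact SigmaCompactSpace.hurewicz Y

/-- Every σ-pseudocompact Tychonoff space is projectively Hurewicz. -/
theorem sigma_pseudocompact_projHurewicz (X : Type*) [TopologicalSpace X] [T35Space X]
    (A : ℕ → Set X) (hpc : ∀ n, PseudocompactSet (A n)) (hcov : ⋃ n, A n = Set.univ) :
    ProjHurewicz X :=
  sigma_pseudocompact_projHurewicz_general X A hpc hcov
end

section
/- Every Tychonoff space of cardinality less than 𝔟 is projectively Hurewicz, where 𝔟 is the bounding number. -/
open Set Filter Topology

/-- Eventual domination on `ℕ → ℕ`. -/
def EvDom (f g : ℕ → ℕ) : Prop := ∀ᶠ n in Filter.atTop, f n ≤ g n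

/-- The bounding number 𝔟: the least cardinality of a family in `ℕ → ℕ`
unbounded with respect to eventual domination. -/
noncomputable def boundingNumber : Cardinal :=
  sInf {c : Cardinal | ∃ F : Set (ℕ → ℕ), Cardinal.mk F = c ∧
    ¬ ∃ g : ℕ → ℕ, ∀ f ∈ F, EvDom f g}

/-- Every Tychonoff space of cardinality less than 𝔟 is
projectively Hurewicz. -/
theorem card_lt_b_projHurewicz (X : Type) [TopologicalSpace X] [T35Space X]
    (h : Cardinal.mk X < boundingNumber) : ProjHurewicz X := by
  intro Y _ hmet hsep f hf hsurj 𝒰 h𝒰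
  rcases isEmpty_or_nonempty Y with hY | hY
  · exact ⟨fun _ => ∅, fun n => ⟨empty_subset _, finite_empty⟩,
      fun y => (IsEmpty.false y).elim⟩
  · letI : MetricSpace Y := TopologicalSpace.metrizableSpaceMetric Y
    haveI : SecondCountableTopology Y :=
      UniformSpace.secondCountable_of_separable Y
    -- countable subcovers
    have hT : ∀ n, ∃ T ⊆ 𝒰 n, T.Countable ∧ ⋃₀ T = Set.univ := by
      intro n
      obtain ⟨T, hTc, hTsub, hTu⟩ := TopologicalSpace.isOpen_sUnion_countable (𝒰 n) (h𝒰 n).1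
      exact ⟨T, hTsub, hTc, by rw [hTu, (h𝒰 n).2]⟩
    choose T hTsub hTc hTu using hT
    have hTne : ∀ n, (T n).Nonempty := by
      intro n
      obtain ⟨y⟩ := hY
      have hy : y ∈ ⋃₀ T n := by rw [hTu n]; trivial
      obtain ⟨V, hV, _⟩ := hy
      exact ⟨V, hV⟩
    have hEnum : ∀ n, ∃ e : ℕ → Set Y, T n = Set.range e := fun n =>
      (hTc n).exists_eq_range (hTne n)
    choose e he using hEnum
    -- each point picks an index in each cover
    have hpick : ∀ (y : Y) (n : ℕ), ∃ k, y ∈ e n k := by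
      intro y n
      have : y ∈ ⋃₀ T n := by rw [hTu n]; trivial
      obtain ⟨V, hV, hyV⟩ := this
      rw [he n] at hV
      obtain ⟨k, rfl⟩ := hV
      exact ⟨k, hyV⟩
    choose fy hfy using hpick
    -- the family {fy y} is bounded since |Y| < 𝔟
    have hcard : Cardinal.mk (Set.range fy) < boundingNumber := by
      calc Cardinal.mk (Set.range fy) ≤ Cardinal.mk Y := Cardinal.mk_range_le
        _ ≤ Cardinal.mk X := Cardinal.mk_le_of_surjective hsurj
        _ < boundingNumber := h
    have hbdd : ∃ g : ℕ → ℕ, ∀ f ∈ Set.range fy, EvDom f g := by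
      by_contra hc
      have : boundingNumber ≤ Cardinal.mk (Set.range fy) :=
        csInf_le' ⟨Set.range fy, rfl, hc⟩
      exact absurd hcard (not_lt.mpr this)
    obtain ⟨g, hg⟩ := hbdd
    refine ⟨fun n => e n '' Set.Iic (g n), fun n => ⟨?_, (Set.finite_Iic _).image _⟩, ?_⟩
    · intro V hV
      obtain ⟨k, _, rfl⟩ := hV
      exact hTsub n (by rw [he n]; exact ⟨k, rfl⟩)
    · intro y
      have := hg (fy y) ⟨y, rfl⟩
      filter_upwards [this] with n hn
      exact ⟨e n (fy y n), ⟨fy y n, hn, rfl⟩, hfy y n⟩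
end

section
/- A countable union of projectively Hurewicz subspaces of a Tychonoff space is projectively Hurewicz. -/
open Set Filter Topology

/-! The image of `X` in a separable metrizable space `Y` is the union of the images of the
`A n`. Each image `f '' A n` is a separable metrizable continuous image of `A n`, hence
Hurewicz, and a countable union of Hurewicz subspaces is Hurewicz: run the Hurewicz
selection on each piece and, at stage `n`, take the union of the selections for the
pieces `0, …, n`. -/

section Hurewicz

variable {Y : Type*} [TopologicalSpace Y]

theorem Hurewicz.exists_finite_eventually_mem_sUnion {S : Set Y} (hS : Hurewicz S)
    (𝒰 : ℕ → Set (Set Y)) (h𝒰 : ∀ n, (∀ U ∈ 𝒰 n, IsOpen U) ∧ ⋃₀ 𝒰 n = univ) :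
    ∃ 𝒱 : ℕ → Set (Set Y), (∀ n, 𝒱 n ⊆ 𝒰 n ∧ (𝒱 n).Finite) ∧
      ∀ y ∈ S, ∀ᶠ n in atTop, y ∈ ⋃₀ 𝒱 n := by
  have hcovS : ∀ n, (∀ V ∈ preimage (Subtype.val : S → Y) '' 𝒰 n, IsOpen V) ∧
      ⋃₀ (preimage (Subtype.val : S → Y) '' 𝒰 n) = univ := by
    refine fun n => ⟨?_, ?_⟩
    · rintro _ ⟨U, hU, rfl⟩
      exact ((h𝒰 n).1 U hU).preimage continuous_subtype_val
    · rw [sUnion_image, ← preimage_iUnion₂, ← sUnion_eq_biUnion, (h𝒰 n).2, preimage_univ]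
  obtain ⟨𝒱, h𝒱, hev⟩ := hS _ hcovS
  choose! lift hlift_mem hlift_preimage using fun n V (hV : V ∈ 𝒱 n) => (h𝒱 n).1 hV
  refine ⟨fun n => lift n '' 𝒱 n, fun n => ⟨?_, (h𝒱 n).2.image _⟩, fun y hy => ?_⟩
  · rintro _ ⟨V, hV, rfl⟩
    exact hlift_mem n V hV
  · filter_upwards [hev ⟨y, hy⟩] with n ⟨V, hV, hyV⟩
    refine ⟨lift n V, mem_image_of_mem _ hV, ?_⟩
    rw [← hlift_preimage n V hV] at hyV
    exact hyV

theorem hurewicz_of_iUnion_eq_univ (S : ℕ → Set Y) (hS : ∀ k, Hurewicz (S k))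
    (hcov : ⋃ k, S k = univ) : Hurewicz Y := by
  intro 𝒰 h𝒰
  choose 𝒲 h𝒲 h𝒲_ev using fun k => (hS k).exists_finite_eventually_mem_sUnion 𝒰 h𝒰
  refine ⟨fun n => ⋃ k ∈ Finset.range (n + 1), 𝒲 k n, fun n => ⟨?_, ?_⟩, fun y => ?_⟩
  · exact iUnion₂_subset fun k _ => (h𝒲 k n).1
  · exact (Finset.range (n + 1)).finite_toSet.biUnion fun k _ => (h𝒲 k n).2
  · obtain ⟨k, hk⟩ := mem_iUnion.mp (hcov ▸ mem_univ y)
    filter_upwards [h𝒲_ev k y hk, eventually_ge_atTop k] with n ⟨U, hU, hyU⟩ hkn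
    exact ⟨U, mem_biUnion (Finset.mem_range.mpr (Nat.lt_succ_of_le hkn)) hU, hyU⟩

end Hurewicz

theorem ProjHurewicz.hurewicz_image {X : Type*} [TopologicalSpace X] {Y : Type}
    [TopologicalSpace Y] [TopologicalSpace.MetrizableSpace Y] [TopologicalSpace.SeparableSpace Y]
    {A : Set X} (hA : ProjHurewicz A) {f : X → Y} (hf : Continuous f) : Hurewicz (f '' A) :=
  hA _ inferInstance (TopologicalSpace.IsSeparable.of_separableSpace _).separableSpace
    (restrictPreimage (f '' A) f ∘ inclusion (subset_preimage_image f A))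
    (by fun_prop) (by rintro ⟨_, x, hx, rfl⟩; exact ⟨⟨x, hx⟩, rfl⟩)

theorem projHurewicz_countable_union_general (X : Type*) [TopologicalSpace X]
    (A : ℕ → Set X) (h : ∀ n, ProjHurewicz (A n)) (hcov : ⋃ n, A n = Set.univ) :
    ProjHurewicz X := by
  intro Y _ _ _ f hf hsurj
  refine hurewicz_of_iUnion_eq_univ (fun n => f '' A n) (fun n => (h n).hurewicz_image hf) ?_
  rw [← image_iUnion, hcov, image_univ, hsurj.range_eq]

/-- A countable union of projectively Hurewicz subspaces of a
Tychonoff space is projectively Hurewicz. -/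
theorem projHurewicz_countable_union (X : Type*) [TopologicalSpace X] [T35Space X]
    (A : ℕ → Set X) (h : ∀ n, ProjHurewicz (A n)) (hcov : ⋃ n, A n = Set.univ) :
    ProjHurewicz X :=
  projHurewicz_countable_union_general X A h hcov
end

section
/- Every cozero subset of a projectively Hurewicz Tychonoff space is projectively Hurewicz. -/
open Set Filter Topology

section Aux
open TopologicalSpace

lemma min_one_eq {d : ℝ} (h : min d 1 < 1) : min d 1 = d := by
  rcases le_total d 1 with h1 | h1
  · exact min_eq_left h1
  · rw [min_eq_right h1] at h; linarith

lemma exists_nice_embedding (Y : Type) [TopologicalSpace Y]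
    (hm : MetrizableSpace Y) (hs : SeparableSpace Y) [Nonempty Y] :
    ∃ e : Y → ℕ → ℝ, Continuous e ∧ (∀ y n, |e y n| ≤ 1) ∧
      ∃ ψ : {v : ℕ → ℝ // v ∈ Set.range e} → Y, Continuous ψ ∧ ∀ y, ψ ⟨e y, ⟨y, rfl⟩⟩ = y := by
  classical
  letI : MetricSpace Y := metrizableSpaceMetric Y
  set u : ℕ → Y := denseSeq Y with hu
  have hud : DenseRange u := denseRange_denseSeq Y
  set e : Y → ℕ → ℝ := fun y n => min (dist y (u n)) 1 with he
  have hcont : Continuous e :=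
    continuous_pi fun n => (continuous_id.dist continuous_const).min continuous_const
  have hbd : ∀ y n, |e y n| ≤ 1 := by
    intro y n
    have h0 : (0:ℝ) ≤ e y n := le_min dist_nonneg zero_le_one
    have h1 : e y n ≤ 1 := min_le_right _ _
    rw [abs_le]; exact ⟨by linarith, h1⟩
  -- key: recover distance
  have key : ∀ (y y' : Y) (ε : ℝ), 0 < ε → ∃ n, ∀ z : Y,
      |e z n - e y n| < min ε 1 / 4 → dist z y < ε := by
    intro y y' ε hε
    set δ := min ε 1 with hδ
    have hδ0 : 0 < δ := lt_min hε one_pos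
    have hδ1 : δ ≤ 1 := min_le_right _ _
    obtain ⟨n, hn⟩ := hud.exists_dist_lt y (by positivity : (0:ℝ) < δ/4)
    refine ⟨n, fun z hz => ?_⟩
    have heyn : e y n = dist y (u n) := min_eq_left (by linarith [dist_nonneg (x := y) (y := u n)])
    have hezn : e z n < δ/2 := by
      have := abs_lt.mp hz
      rw [heyn] at this; linarith [this.2]
    have : dist z (u n) < δ/2 := by
      have h1 : min (dist z (u n)) 1 < 1 := lt_of_lt_of_le hezn (by linarith)
      rw [← min_one_eq h1]; exact hezn
    calc dist z y ≤ dist z (u n) + dist y (u n) := dist_triangle_right _ _ _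
      _ < δ/2 + δ/4 := add_lt_add this hn
      _ < δ := by linarith
      _ ≤ ε := min_le_left _ _
  have hinj : Function.Injective e := by
    intro y y' hyy'
    by_contra hne
    have hd : 0 < dist y y' := dist_pos.mpr hne
    obtain ⟨n, hn⟩ := key y y' (dist y y') hd
    have h4 : |e y' n - e y' n| < min (dist y y') 1 / 4 := by
      simp only [sub_self, abs_zero]; positivity
    have h5 := hn y' (by rw [hyy']; exact h4)
    rw [dist_comm y' y] at h5
    exact absurd h5 (lt_irrefl _)
  refine ⟨e, hcont, hbd, fun v => v.2.choose, ?_,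
    fun y => hinj (Exists.choose_spec (⟨y, rfl⟩ : ∃ y', e y' = e y))⟩
  rw [continuous_iff_continuousAt]
  intro v₀
  set y₀ := v₀.2.choose with hy₀
  have hv₀ : e y₀ = v₀.val := v₀.2.choose_spec
  rw [ContinuousAt, Metric.tendsto_nhds]
  intro ε hε
  obtain ⟨n, hn⟩ := key y₀ y₀ ε hε
  have hopen : IsOpen {v : {v : ℕ → ℝ // v ∈ Set.range e} | |v.val n - v₀.val n| < min ε 1 / 4} := by
    have hc : Continuous fun v : {v : ℕ → ℝ // v ∈ Set.range e} => |v.val n - v₀.val n| :=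
      ((continuous_apply n).comp continuous_subtype_val |>.sub continuous_const).abs
    exact isOpen_lt hc continuous_const
  have hmem : v₀ ∈ {v : {v : ℕ → ℝ // v ∈ Set.range e} | |v.val n - v₀.val n| < min ε 1 / 4} := by
    simp only [mem_setOf_eq, sub_self, abs_zero]
    positivity
  filter_upwards [hopen.mem_nhds hmem] with v hv
  have hev : e (v.2.choose) = v.val := v.2.choose_spec
  have h6 : |e (v.2.choose) n - e y₀ n| < min ε 1 / 4 := by rw [hev, hv₀]; exact hv
  exact hn (v.2.choose) h6

lemma hurewicz_of_isEmpty {Y : Type*} [TopologicalSpace Y] [IsEmpty Y] : Hurewicz Y :=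
  fun _ _ => ⟨fun _ => ∅, fun _ => ⟨empty_subset _, finite_empty⟩, fun y => (IsEmpty.false y).elim⟩

lemma hurewicz_of_iUnion_images {Z : Type*} [TopologicalSpace Z]
    (W : ℕ → Type*) [∀ k, TopologicalSpace (W k)]
    (hW : ∀ k, Hurewicz (W k)) (φ : ∀ k, W k → Z) (hφ : ∀ k, Continuous (φ k))
    (hcov : ∀ z : Z, ∃ k w, φ k w = z) : Hurewicz Z := by
  intro 𝒰 h𝒰
  have key : ∀ k : ℕ, ∃ 𝒱 : ℕ → Set (Set Z), (∀ n, 𝒱 n ⊆ 𝒰 n ∧ (𝒱 n).Finite) ∧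
      ∀ w : W k, ∀ᶠ n in atTop, φ k w ∈ ⋃₀ 𝒱 n := by
    intro k
    obtain ⟨𝒱', h𝒱', hcov'⟩ := hW k (fun n => (fun V => φ k ⁻¹' V) '' 𝒰 n) (by
      intro n
      refine ⟨?_, eq_univ_of_forall fun w => ?_⟩
      · rintro _ ⟨V, hV, rfl⟩; exact ((h𝒰 n).1 V hV).preimage (hφ k)
      · have : φ k w ∈ ⋃₀ 𝒰 n := (h𝒰 n).2 ▸ mem_univ _
        obtain ⟨V, hV, hw⟩ := this
        exact ⟨φ k ⁻¹' V, ⟨V, hV, rfl⟩, hw⟩)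
    classical
    set sel : ℕ → Set (W k) → Set Z := fun n W' =>
      if h : ∃ V ∈ 𝒰 n, φ k ⁻¹' V = W' then h.choose else ∅ with hsel
    refine ⟨fun n => sel n '' 𝒱' n, fun n => ⟨?_, ((h𝒱' n).2.image _)⟩, fun w => ?_⟩
    · rintro _ ⟨W', hW', rfl⟩
      obtain ⟨V, hV, hVW⟩ := (h𝒱' n).1 hW'
      have h : ∃ V ∈ 𝒰 n, φ k ⁻¹' V = W' := ⟨V, hV, hVW⟩
      simp only [hsel, dif_pos h]
      exact h.choose_spec.1
    · filter_upwards [hcov' w] with n hn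
      obtain ⟨W', hW', hwW⟩ := hn
      obtain ⟨V, hV, hVW⟩ := (h𝒱' n).1 hW'
      have h : ∃ V ∈ 𝒰 n, φ k ⁻¹' V = W' := ⟨V, hV, hVW⟩
      refine ⟨sel n W', mem_image_of_mem _ hW', ?_⟩
      have : φ k ⁻¹' (sel n W') = W' := by simp only [hsel, dif_pos h]; exact h.choose_spec.2
      rw [← this] at hwW; exact hwW
  choose 𝒱k h𝒱k hcovk using key
  refine ⟨fun n => ⋃ k ∈ Finset.range (n+1), 𝒱k k n, fun n => ⟨?_, ?_⟩, fun z => ?_⟩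
  · exact iUnion₂_subset fun k _ => (h𝒱k k n).1
  · exact Set.Finite.biUnion (Finset.range (n+1)).finite_toSet (fun k _ => (h𝒱k k n).2)
  · obtain ⟨k, w, rfl⟩ := hcov z
    filter_upwards [hcovk k w, eventually_ge_atTop k] with n hn hnk
    exact sUnion_mono (subset_iUnion₂ (s := fun k _ => 𝒱k k n) k
      (Finset.mem_range.mpr (Nat.lt_succ_of_le hnk))) hn

lemma hurewicz_closed {T : Type*} [TopologicalSpace T] (hT : Hurewicz T)
    {C : Set T} (hC : IsClosed C) : Hurewicz C := by
  classical
  intro 𝒰 h𝒰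
  set L : Set ↥C → Set T := fun V =>
    if h : ∃ V', IsOpen V' ∧ Subtype.val ⁻¹' V' = V then h.choose else ∅ with hL
  have hLspec : ∀ {n} {V}, V ∈ 𝒰 n → IsOpen (L V) ∧ Subtype.val ⁻¹' (L V) = V := by
    intro n V hV
    have h : ∃ V', IsOpen V' ∧ Subtype.val ⁻¹' V' = V := by
      obtain ⟨V', hV', rfl⟩ := isOpen_induced_iff.mp ((h𝒰 n).1 V hV)
      exact ⟨V', hV', rfl⟩
    simp only [hL, dif_pos h]
    exact h.choose_spec
  obtain ⟨𝒱', h𝒱', hcov'⟩ := hT (fun n => insert Cᶜ (L '' 𝒰 n)) (by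
    intro n
    refine ⟨?_, eq_univ_of_forall fun t => ?_⟩
    · rintro V' (rfl | ⟨V, hV, rfl⟩)
      · exact hC.isOpen_compl
      · exact (hLspec hV).1
    · by_cases ht : t ∈ C
      · have : (⟨t, ht⟩ : ↥C) ∈ ⋃₀ 𝒰 n := (h𝒰 n).2 ▸ mem_univ _
        obtain ⟨V, hV, htV⟩ := this
        refine ⟨L V, mem_insert_of_mem _ (mem_image_of_mem _ hV), ?_⟩
        rw [← (hLspec hV).2] at htV; exact htV
      · exact ⟨Cᶜ, mem_insert _ _, ht⟩)
  refine ⟨fun n => (fun V' => Subtype.val ⁻¹' V') '' (𝒱' n ∩ (L '' 𝒰 n)),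
    fun n => ⟨?_, (((h𝒱' n).2.subset inter_subset_left).image _)⟩, fun c => ?_⟩
  · rintro _ ⟨V', ⟨_, V, hV, rfl⟩, rfl⟩
    show Subtype.val ⁻¹' (L V) ∈ 𝒰 n
    rw [(hLspec hV).2]; exact hV
  · filter_upwards [hcov' c.val] with n hn
    obtain ⟨V', hV', hcV'⟩ := hn
    rcases (h𝒱' n).1 hV' with rfl | hmem
    · exact absurd c.2 hcV'
    · exact ⟨Subtype.val ⁻¹' V', mem_image_of_mem _ ⟨hV', hmem⟩, hcV'⟩

end Aux

/-- Every cozero subset of a projectively Hurewicz Tychonoff space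
is projectively Hurewicz. -/
theorem projHurewicz_cozero_subset (X : Type*) [TopologicalSpace X] [T35Space X]
    (hX : ProjHurewicz X) (O : Set X) (hO : IsCozero O) : ProjHurewicz O := by
  classical
  obtain ⟨g, hgc, hOg⟩ := hO
  intro Y _ hm hs f hf hfs
  rcases isEmpty_or_nonempty Y with hY | hY
  · exact hurewicz_of_isEmpty
  obtain ⟨e, hec, hebd, ψ, hψc, hψe⟩ := exists_nice_embedding Y hm hs
  have hmemO : ∀ x : X, x ∈ O ↔ g x ≠ 0 := by
    intro x; rw [hOg]; simp [mem_preimage]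
  have hOopen : IsOpen O := by
    rw [hOg]; exact (isOpen_compl_singleton).preimage hgc
  -- the lifted map
  set k : X → ℕ → ℝ := fun x n => if hx : x ∈ O then e (f ⟨x, hx⟩) n * g x else 0 with hk
  have hkO : ∀ (x : X) (hx : x ∈ O) (n : ℕ), k x n = e (f ⟨x, hx⟩) n * g x := by
    intro x hx n; simp only [hk, dif_pos hx]
  have hkbd : ∀ x n, |k x n| ≤ |g x| := by
    intro x n
    by_cases hx : x ∈ O
    · rw [hkO x hx n, abs_mul]
      calc |e (f ⟨x, hx⟩) n| * |g x| ≤ 1 * |g x| :=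
            mul_le_mul_of_nonneg_right (hebd _ _) (abs_nonneg _)
        _ = |g x| := one_mul _
    · simp only [hk, dif_neg hx, abs_zero, abs_nonneg]
  have hkcont : ∀ n, Continuous fun x => k x n := by
    intro n
    rw [continuous_iff_continuousAt]
    intro x₀
    by_cases hx₀ : x₀ ∈ O
    · have hres : ContinuousOn (fun x => k x n) O := by
        rw [continuousOn_iff_continuous_restrict]
        have : O.domRestrict (fun x => k x n) = fun p : O => e (f p) n * g p.val := by
          funext p; exact hkO p.val p.2 n
        rw [this]
        exact (((continuous_apply n).comp (hec.comp hf))).mul (hgc.comp continuous_subtype_val)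
      exact hres.continuousAt (hOopen.mem_nhds hx₀)
    · have hg0 : g x₀ = 0 := by
        by_contra h; exact hx₀ ((hmemO x₀).mpr h)
    -- squeeze
      have hk0 : k x₀ n = 0 := by simp only [hk, dif_neg hx₀]
      rw [ContinuousAt, hk0]
      have h1 : Tendsto (fun x => |g x|) (𝓝 x₀) (𝓝 0) := by
        have := (hgc.abs).continuousAt (x := x₀)
        rwa [ContinuousAt, hg0, abs_zero] at this
      have h2 : Tendsto (fun x => -|g x|) (𝓝 x₀) (𝓝 0) := by
        simpa using h1.neg
      exact tendsto_of_tendsto_of_tendsto_of_le_of_le h2 h1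
        (fun x => neg_le_of_abs_le (hkbd x n)) (fun x => le_of_abs_le (hkbd x n))
  set H : X → (ℕ → ℝ) × ℝ := fun x => (k x, g x) with hH
  have hHcont : Continuous H := (continuous_pi hkcont).prodMk hgc
  set T := {p : (ℕ → ℝ) × ℝ // p ∈ Set.range H} with hT
  have hTH : Hurewicz T := by
    refine hX T inferInstance inferInstance (fun x => ⟨H x, mem_range_self x⟩)
      (hHcont.subtype_mk _) ?_
    rintro ⟨p, x, rfl⟩; exact ⟨x, rfl⟩
  -- closed pieces
  set C : ℕ → Set T := fun j => {q | 1/((j:ℝ)+1) ≤ |q.val.2|} with hC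
  have hCclosed : ∀ j, IsClosed (C j) := by
    intro j
    have hc : Continuous fun q : T => |q.val.2| :=
      (continuous_snd.comp continuous_subtype_val).abs
    exact isClosed_le continuous_const hc
  have hCH : ∀ j, Hurewicz (C j) := fun j => hurewicz_closed hTH (hCclosed j)
  -- membership of quotient in range e
  have hquot : ∀ (j : ℕ) (q : C j), (fun n => q.val.val.1 n / q.val.val.2) ∈ Set.range e := by
    rintro j ⟨⟨p, x, rfl⟩, hq⟩
    have hgx : g x ≠ 0 := by
      intro h
      have h2 : (1:ℝ)/((j:ℝ)+1) ≤ |g x| := hq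
      rw [h, abs_zero] at h2
      have h3 : (0:ℝ) < 1/((j:ℝ)+1) := by positivity
      linarith
    have hxO : x ∈ O := (hmemO x).mpr hgx
    refine ⟨f ⟨x, hxO⟩, ?_⟩
    funext n
    show e (f ⟨x, hxO⟩) n = k x n / g x
    rw [hkO x hxO n, mul_div_assoc, div_self hgx, mul_one]
  set φ : ∀ j : ℕ, C j → Y := fun j q => ψ ⟨fun n => q.val.val.1 n / q.val.val.2, hquot j q⟩
    with hφ
  have hφc : ∀ j, Continuous (φ j) := by
    intro j
    apply hψc.comp
    apply Continuous.subtype_mk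
    apply continuous_pi
    intro n
    have hd : ∀ q : C j, q.val.val.2 ≠ 0 := by
      intro q
      have h1 : (0:ℝ) < 1/((j:ℝ)+1) := by positivity
      have h2 := q.2
      intro h
      rw [mem_setOf_eq, h, abs_zero] at h2
      linarith [h2]
    exact ((continuous_apply n).comp
      (continuous_fst.comp (continuous_subtype_val.comp continuous_subtype_val))).div
      (continuous_snd.comp (continuous_subtype_val.comp continuous_subtype_val)) hd
  refine hurewicz_of_iUnion_images (fun j => C j) hCH φ hφc ?_
  intro y
  obtain ⟨x, rfl⟩ := hfs y
  have hgx : g x.val ≠ 0 := (hmemO x.val).mp x.2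
  obtain ⟨j, hj⟩ := exists_nat_one_div_lt (abs_pos.mpr hgx)
  have hq2 : (1:ℝ)/((j:ℝ)+1) ≤ |(H x.val).2| := le_of_lt hj
  set q : C j := ⟨⟨H x.val, mem_range_self _⟩, hq2⟩ with hqdef
  refine ⟨j, q, ?_⟩
  have heq : (fun n => q.val.val.1 n / q.val.val.2) = e (f x) := by
    funext n
    show k x.val n / g x.val = e (f x) n
    rw [hkO x.val x.2 n]
    have hxx : (⟨x.val, x.2⟩ : O) = x := Subtype.ext rfl
    rw [hxx, mul_div_assoc, div_self hgx, mul_one]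
  have hsub : (⟨fun n => q.val.val.1 n / q.val.val.2, hquot j q⟩ :
      {v : ℕ → ℝ // v ∈ Set.range e}) = ⟨e (f x), ⟨f x, rfl⟩⟩ := Subtype.ext heq
  show ψ ⟨fun n => q.val.val.1 n / q.val.val.2, hquot j q⟩ = f x
  rw [hsub]
  exact hψe (f x)
end

section
/- For a Tychonoff space X, X is projectively Hurewicz if and only if for every continuous map f : X → ℝ^ω, the image f(X) is a Hurewicz space. -/
open Set Filter Topology

/-
A separable metrizable space embeds into the Hilbert cube, hence into `ℝ^ω`. So every separable
metrizable image `Y = f(X)` is homeomorphic to the image of `X` under the composite `X → Y → ℝ^ω`,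
and the Hurewicz property passes along homeomorphisms (indeed along continuous surjections, by
pulling covers back).
-/

theorem Hurewicz.of_continuous_surjective {Z Y : Type*} [TopologicalSpace Z] [TopologicalSpace Y]
    (hZ : Hurewicz Z) {h : Z → Y} (hc : Continuous h) (hs : Function.Surjective h) :
    Hurewicz Y := by
  intro 𝒰 h𝒰
  obtain ⟨𝒱, h𝒱, h𝒱_eventually⟩ := hZ (fun n => preimage h '' 𝒰 n) fun n =>
    ⟨by rintro _ ⟨V, hV, rfl⟩; exact ((h𝒰 n).1 V hV).preimage hc,
     by rw [sUnion_image, ← preimage_iUnion₂, ← sUnion_eq_biUnion, (h𝒰 n).2, preimage_univ]⟩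
  refine ⟨fun n => {V ∈ 𝒰 n | h ⁻¹' V ∈ 𝒱 n}, fun n => ⟨fun V hV => hV.1, ?_⟩, fun y => ?_⟩
  · exact ((h𝒱 n).2.preimage (preimage_injective.mpr hs).injOn).subset fun V hV => hV.2
  · obtain ⟨x, rfl⟩ := hs y
    filter_upwards [h𝒱_eventually x] with n ⟨W, hW, hxW⟩
    obtain ⟨V, hV, rfl⟩ := (h𝒱 n).1 hW
    exact ⟨V, ⟨hV, hW⟩, hxW⟩

theorem exists_isEmbedding_nat_real (Y : Type*) [TopologicalSpace Y]
    [TopologicalSpace.MetrizableSpace Y] [TopologicalSpace.SeparableSpace Y] :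
    ∃ e : Y → ℕ → ℝ, IsEmbedding e := by
  let := TopologicalSpace.metrizableSpaceMetric Y
  obtain ⟨F, hF⟩ := Metric.PiNatEmbed.exists_embedding_to_hilbert_cube (X := Y)
  exact ⟨fun y n => F y n, (IsEmbedding.piMap fun _ => IsEmbedding.subtypeVal).comp hF⟩

theorem projHurewicz_iff_image_Romega_Hurewicz_general (X : Type*) [TopologicalSpace X] :
    ProjHurewicz X ↔
      ∀ f : X → (ℕ → ℝ), Continuous f → Hurewicz (Set.range f) := by
  refine ⟨fun hX f hf => hX (range f) inferInstance inferInstance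
    (rangeFactorization f) (hf.codRestrict _) rangeFactorization_surjective, ?_⟩
  intro himage Y _ _ _ f hf hfs
  obtain ⟨e, he⟩ := exists_isEmbedding_nat_real Y
  have hrange : range (e ∘ f) = range e := by rw [range_comp, hfs.range_eq, image_univ]
  have hHurewicz : Hurewicz (range e) := hrange ▸ himage (e ∘ f) (he.continuous.comp hf)
  exact hHurewicz.of_continuous_surjective he.toHomeomorph.symm.continuous
    he.toHomeomorph.symm.surjective

/-- `X` is projectively Hurewicz iff for every continuous
`f : X → ℝ^ω` the image `f(X)` is Hurewicz. -/
theorem projHurewicz_iff_image_Romega_Hurewicz (X : Type*) [TopologicalSpace X] [T35Space X] :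
    ProjHurewicz X ↔
      ∀ f : X → (ℕ → ℝ), Continuous f → Hurewicz (Set.range f) :=
  projHurewicz_iff_image_Romega_Hurewicz_general X
end

section
/- For a Tychonoff space X, X is projectively Hurewicz if and only if X satisfies U_fin(O^ω_cz, Γ), i.e., for every sequence (U_n) of countable cozero covers of X, none of which contains a finite subcover, there exist finite subfamilies F_n ⊆ U_n such that {⋃F_n : n ∈ ℕ} is a γ-cover of X. -/
open Set Filter Topology

lemma aux_cozero_fun {Y : Type} [TopologicalSpace Y] [TopologicalSpace.MetrizableSpace Y]
    {U : Set Y} (hU : IsOpen U) : ∃ g : Y → ℝ, Continuous g ∧ U = g ⁻¹' {0}ᶜ := by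
  letI := TopologicalSpace.metrizableSpaceMetric Y
  by_cases h : Uᶜ = ∅
  · exact ⟨fun _ => 1, continuous_const, by
      have : U = univ := by rwa [← compl_empty_iff]
      simp [this]⟩
  · refine ⟨fun y => Metric.infDist y Uᶜ, Metric.continuous_infDist_pt _, ?_⟩
    ext y
    have hne : Uᶜ.Nonempty := nonempty_iff_ne_empty.2 h
    have hcl : IsClosed Uᶜ := hU.isClosed_compl
    simp only [mem_preimage, mem_compl_iff, mem_singleton_iff]
    rw [← notMem_compl_iff (s := U), hcl.notMem_iff_infDist_pos hne]
    exact ⟨fun h => h.ne', fun h => lt_of_le_of_ne Metric.infDist_nonneg (Ne.symm h)⟩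

lemma aux_subseq {X : Type*} (A : ℕ → Set X) (h : (Set.range fun n => A n).Infinite) :
    ∃ m : ℕ → ℕ, StrictMono m ∧ Function.Injective fun k => A (m k) := by
  have key : ∀ N : ℕ, ∃ n, N < n ∧ A n ∉ A '' Set.Iic N := by
    intro N
    by_contra hc
    push_neg at hc
    apply h
    have hsub : (Set.range fun n => A n) ⊆ A '' Set.Iic N := by
      rintro _ ⟨n, rfl⟩
      rcases le_or_gt n N with hn | hn
      · exact ⟨n, hn, rfl⟩
      · exact hc n hn
    exact ((Set.finite_Iic N).image A).subset hsub
  choose nxt hlt hnot using key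
  let m : ℕ → ℕ := fun k => Nat.rec 0 (fun _ prev => nxt prev) k
  have hmono : StrictMono m := strictMono_nat_of_lt_succ fun k => hlt (m k)
  refine ⟨m, hmono, ?_⟩
  have hne : ∀ j k, j ≤ k → A (m (k + 1)) ≠ A (m j) := by
    intro j k hjk hEq
    exact hnot (m k) ⟨m j, hmono.monotone hjk, hEq.symm⟩
  intro a b hab
  rcases lt_trichotomy a b with hlt' | hEq | hgt
  · obtain ⟨c, rfl⟩ := Nat.exists_eq_add_of_lt hlt'
    exact absurd hab.symm (hne a (a + c) (Nat.le_add_right _ _))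
  · exact hEq
  · obtain ⟨c, rfl⟩ := Nat.exists_eq_add_of_lt hgt
    exact absurd hab (hne b (b + c) (Nat.le_add_right _ _))

lemma bwd {X : Type*} [TopologicalSpace X]
    (hyp : ∀ 𝒰 : ℕ → Set (Set X),
        (∀ n, (𝒰 n).Countable ∧ (∀ V ∈ 𝒰 n, IsCozero V) ∧ ⋃₀ 𝒰 n = Set.univ ∧
          ¬ ∃ 𝒢 ⊆ 𝒰 n, 𝒢.Finite ∧ ⋃₀ 𝒢 = Set.univ) →
        ∃ ℱ : ℕ → Set (Set X), (∀ n, ℱ n ⊆ 𝒰 n ∧ (ℱ n).Finite) ∧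
          IsGammaCover (Set.range fun n => ⋃₀ ℱ n)) :
    ProjHurewicz X := by
  classical
  intro Y _ hmet hsep f hf hfs 𝒲 h𝒲
  by_cases hY : Nonempty Y
  swap
  · exact ⟨fun _ => ∅, fun n => ⟨empty_subset _, finite_empty⟩,
      fun y => absurd ⟨y⟩ hY⟩
  haveI := hmet; haveI := hsep
  haveI : SecondCountableTopology Y := by
    letI := TopologicalSpace.metrizableSpaceMetric Y
    exact UniformSpace.secondCountable_of_separable Y
  -- countable subcovers
  have hsc : ∀ i, ∃ C : Set (Set Y), C ⊆ 𝒲 i ∧ C.Countable ∧ ⋃₀ C = univ := by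
    intro i
    obtain ⟨T, hTc, hTU⟩ := TopologicalSpace.isOpen_iUnion_countable
      (fun V : ↥(𝒲 i) => (V : Set Y)) (fun V => (h𝒲 i).1 V V.2)
    refine ⟨Subtype.val '' T, by rintro _ ⟨V, _, rfl⟩; exact V.2, hTc.image _, ?_⟩
    rw [sUnion_image, hTU, ← sUnion_eq_iUnion, (h𝒲 i).2]
  choose C hCsub hCc hCcov using hsc
  have hCne : ∀ i, (C i).Nonempty := by
    intro i
    obtain ⟨y⟩ := hY
    have : y ∈ ⋃₀ C i := (hCcov i) ▸ mem_univ y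
    obtain ⟨V, hV, _⟩ := this
    exact ⟨V, hV⟩
  have henum : ∀ i, ∃ c : ℕ → Set Y, C i = Set.range c :=
    fun i => (hCc i).exists_eq_range (hCne i)
  choose c hc using henum
  have hcmemC : ∀ i k, c i k ∈ C i := fun i k => (hc i) ▸ mem_range_self k
  have hcmem : ∀ i k, c i k ∈ 𝒲 i := fun i k => hCsub i (hcmemC i k)
  have hcopen : ∀ i k, IsOpen (c i k) := fun i k => (h𝒲 i).1 _ (hcmem i k)
  have hccov : ∀ (y : Y) i, ∃ k, y ∈ c i k := by
    intro y i
    have : y ∈ ⋃₀ C i := (hCcov i) ▸ mem_univ y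
    obtain ⟨V, hV, hyV⟩ := this
    rw [hc i] at hV
    obtain ⟨k, rfl⟩ := hV
    exact ⟨k, hyV⟩
  -- intersection covers
  set D : ℕ → Set (Set Y) :=
    fun n => Set.range (fun κ : Fin (n + 1) → ℕ => ⋂ i : Fin (n + 1), c i (κ i)) with hD
  have hDopen : ∀ n, ∀ W ∈ D n, IsOpen W := by
    rintro n _ ⟨κ, rfl⟩
    exact isOpen_iInter_of_finite fun i => hcopen i (κ i)
  have hDcov : ∀ (y : Y) n, ∃ W ∈ D n, y ∈ W := by
    intro y n
    refine ⟨_, ⟨fun i : Fin (n + 1) => (hccov y i).choose, rfl⟩, ?_⟩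
    exact mem_iInter.2 fun i => (hccov y i).choose_spec
  have hDproj : ∀ n (i : ℕ), i ≤ n → ∀ W ∈ D n, ∃ W' ∈ C i, W ⊆ W' := by
    rintro n i hi _ ⟨κ, rfl⟩
    exact ⟨c i (κ ⟨i, by omega⟩), hcmemC i _, iInter_subset _ (⟨i, by omega⟩ : Fin (n + 1))⟩
  by_cases hP : ∀ i, ∃ F ⊆ C i, F.Finite ∧ ⋃₀ F = univ
  · choose F hFsub hFfin hFcov using hP
    exact ⟨F, fun n => ⟨(hFsub n).trans (hCsub n), hFfin n⟩,
      fun y => Eventually.of_forall fun n => (hFcov n) ▸ mem_univ y⟩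
  · rw [not_forall] at hP
    obtain ⟨N, hN⟩ := hP
    set 𝒰 : ℕ → Set (Set X) := fun n => (f ⁻¹' ·) '' D (N + n) with h𝒰
    have hhyp : ∀ n, (𝒰 n).Countable ∧ (∀ V ∈ 𝒰 n, IsCozero V) ∧ ⋃₀ 𝒰 n = Set.univ ∧
        ¬ ∃ 𝒢 ⊆ 𝒰 n, 𝒢.Finite ∧ ⋃₀ 𝒢 = Set.univ := by
      intro n
      refine ⟨(countable_range _).image _, ?_, ?_, ?_⟩
      · rintro _ ⟨W, hWD, rfl⟩
        obtain ⟨g, hgc, hgeq⟩ := aux_cozero_fun (hDopen _ W hWD)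
        exact ⟨g ∘ f, hgc.comp hf, by rw [hgeq, preimage_comp]⟩
      · ext x
        simp only [mem_univ, iff_true, mem_sUnion]
        obtain ⟨W, hWD, hxW⟩ := hDcov (f x) (N + n)
        exact ⟨f ⁻¹' W, ⟨W, hWD, rfl⟩, hxW⟩
      · rintro ⟨𝒢, h𝒢sub, h𝒢fin, h𝒢cov⟩
        refine hN ?_
        have hsel : ∀ G : Set X, ∃ W', G ∈ 𝒢 → W' ∈ C N ∧ G ⊆ f ⁻¹' W' := by
          intro G
          by_cases hG : G ∈ 𝒢
          · obtain ⟨W, hWD, rfl⟩ := h𝒢sub hG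
            obtain ⟨W', hW'C, hWW'⟩ := hDproj (N + n) N (Nat.le_add_right _ _) W hWD
            exact ⟨W', fun _ => ⟨hW'C, preimage_mono hWW'⟩⟩
          · exact ⟨∅, fun h => absurd h hG⟩
        choose ψ hψ using hsel
        refine ⟨ψ '' 𝒢, fun W hW => by obtain ⟨G, hG, rfl⟩ := hW; exact (hψ G hG).1,
          h𝒢fin.image _, ?_⟩
        ext y
        simp only [mem_univ, iff_true, mem_sUnion]
        obtain ⟨x, rfl⟩ := hfs y
        have : x ∈ ⋃₀ 𝒢 := h𝒢cov ▸ mem_univ x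
        obtain ⟨G, hG, hxG⟩ := this
        exact ⟨ψ G, ⟨G, hG, rfl⟩, (hψ G hG).2 hxG⟩
    obtain ⟨ℱ, hℱ, hγ⟩ := hyp 𝒰 hhyp
    obtain ⟨m, hm, hinj⟩ := aux_subseq (fun n => ⋃₀ ℱ n) hγ.1
    have hbad : ∀ x : X, {k | x ∉ ⋃₀ ℱ (m k)}.Finite := by
      intro x
      refine ((hγ.2 x).preimage hinj.injOn).subset ?_
      intro k hk
      exact ⟨⟨m k, rfl⟩, hk⟩
    have hsel : ∀ (i : ℕ) (U : Set X), ∃ W', U ∈ ℱ (m i) → W' ∈ 𝒲 i ∧ U ⊆ f ⁻¹' W' := by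
      intro i U
      by_cases hU : U ∈ ℱ (m i)
      · obtain ⟨W, hWD, rfl⟩ := (hℱ (m i)).1 hU
        have hle : i ≤ N + m i := le_trans hm.le_apply (Nat.le_add_left _ _)
        obtain ⟨W', hW'C, hWW'⟩ := hDproj (N + m i) i hle W hWD
        exact ⟨W', fun _ => ⟨hCsub i hW'C, preimage_mono hWW'⟩⟩
      · exact ⟨∅, fun h => absurd h hU⟩
    choose ψ hψ using hsel
    refine ⟨fun i => ψ i '' ℱ (m i),
      fun i => ⟨by rintro _ ⟨U, hU, rfl⟩; exact (hψ i U hU).1, (hℱ (m i)).2.image _⟩, ?_⟩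
    intro y
    obtain ⟨x, rfl⟩ := hfs y
    have hev : ∀ᶠ k in atTop, x ∈ ⋃₀ ℱ (m k) := by
      rw [← Nat.cofinite_eq_atTop]
      exact eventually_cofinite.2 (hbad x)
    filter_upwards [hev] with k hk
    obtain ⟨U, hUℱ, hxU⟩ := hk
    exact ⟨ψ k U, ⟨U, hUℱ, rfl⟩, (hψ k U hUℱ).2 hxU⟩

lemma fwd {X : Type*} [TopologicalSpace X] (hP : ProjHurewicz X)
    (𝒰 : ℕ → Set (Set X))
    (h : ∀ n, (𝒰 n).Countable ∧ (∀ V ∈ 𝒰 n, IsCozero V) ∧ ⋃₀ 𝒰 n = Set.univ ∧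
          ¬ ∃ 𝒢 ⊆ 𝒰 n, 𝒢.Finite ∧ ⋃₀ 𝒢 = Set.univ) :
    ∃ ℱ : ℕ → Set (Set X), (∀ n, ℱ n ⊆ 𝒰 n ∧ (ℱ n).Finite) ∧
      IsGammaCover (Set.range fun n => ⋃₀ ℱ n) := by
  classical
  -- X is nonempty
  have hX : Nonempty X := by
    by_contra hx
    exact (h 0).2.2.2 ⟨∅, empty_subset _, finite_empty, by
      rw [sUnion_empty, eq_comm, univ_eq_empty_iff]
      exact ⟨fun x => hx ⟨x⟩⟩⟩
  obtain ⟨x₀⟩ := hX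
  -- enumerate each cover
  have henum : ∀ n, ∃ u : ℕ → Set X, 𝒰 n = Set.range u := by
    intro n
    refine (h n).1.exists_eq_range ?_
    have : x₀ ∈ ⋃₀ 𝒰 n := (h n).2.2.1 ▸ mem_univ x₀
    obtain ⟨V, hV, _⟩ := this
    exact ⟨V, hV⟩
  choose u hu using henum
  have humem : ∀ n k, u n k ∈ 𝒰 n := fun n k => (hu n) ▸ mem_range_self k
  have hcoz : ∀ n k, IsCozero (u n k) := fun n k => (h n).2.1 _ (humem n k)
  choose g hgc hgeq using hcoz
  -- the map into ℝ^(ℕ×ℕ)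
  set e : X → (ℕ × ℕ → ℝ) := fun x p => g p.1 p.2 x with he
  have hec : Continuous e := continuous_pi fun p => hgc p.1 p.2
  set Y : Type := ↥(Set.range e) with hY
  set f : X → Y := fun x => ⟨e x, mem_range_self x⟩ with hf
  have hfc : Continuous f := hec.subtype_mk _
  have hfs : Function.Surjective f := fun y => by
    obtain ⟨x, hx⟩ := y.2
    exact ⟨x, Subtype.ext hx⟩
  have hHur : Hurewicz Y := hP Y inferInstance inferInstance f hfc hfs
  -- open covers of Y
  set W : ℕ → ℕ → Set Y := fun n k => {y : Y | (y : ℕ × ℕ → ℝ) (n, k) ≠ 0} with hW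
  have hWopen : ∀ n k, IsOpen (W n k) := by
    intro n k
    have : Continuous fun y : Y => (y : ℕ × ℕ → ℝ) (n, k) :=
      (continuous_apply _).comp continuous_subtype_val
    exact isOpen_compl_singleton.preimage this
  have hmemW : ∀ n k (x : X), f x ∈ W n k ↔ x ∈ u n k := by
    intro n k x
    have : (f x : ℕ × ℕ → ℝ) (n, k) = g n k x := rfl
    simp only [hW, mem_setOf_eq, this]
    rw [hgeq n k]
    simp
  set 𝒲 : ℕ → Set (Set Y) := fun n => Set.range (W n) with h𝒲
  have h𝒲cov : ∀ n, (∀ V ∈ 𝒲 n, IsOpen V) ∧ ⋃₀ 𝒲 n = Set.univ := by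
    intro n
    refine ⟨by rintro V ⟨k, rfl⟩; exact hWopen n k, ?_⟩
    ext y
    simp only [mem_univ, iff_true, mem_sUnion]
    obtain ⟨x, rfl⟩ := hfs y
    have hx : x ∈ ⋃₀ 𝒰 n := (h n).2.2.1 ▸ mem_univ x
    obtain ⟨V, hV, hxV⟩ := hx
    rw [hu n] at hV
    obtain ⟨k, rfl⟩ := hV
    exact ⟨W n k, ⟨k, rfl⟩, (hmemW n k x).2 hxV⟩
  obtain ⟨𝒱, h𝒱, hev⟩ := hHur 𝒲 h𝒲cov
  -- transfer back
  set φ : ℕ → Set Y → Set X := fun n V =>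
    u n (if hk : ∃ k, W n k = V then hk.choose else 0) with hφ
  set ℱ : ℕ → Set (Set X) := fun n => φ n '' 𝒱 n with hℱ
  have hℱsub : ∀ n, ℱ n ⊆ 𝒰 n := by
    rintro n _ ⟨V, _, rfl⟩
    exact humem n _
  have hℱfin : ∀ n, (ℱ n).Finite := fun n => ((h𝒱 n).2).image _
  -- eventual membership
  have hevX : ∀ x : X, ∀ᶠ n in atTop, x ∈ ⋃₀ ℱ n := by
    intro x
    filter_upwards [hev (f x)] with n hn
    obtain ⟨V, hV𝒱, hfV⟩ := hn
    have hVrange : V ∈ 𝒲 n := (h𝒱 n).1 hV𝒱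
    have hk : ∃ k, W n k = V := hVrange
    refine ⟨φ n V, ⟨V, hV𝒱, rfl⟩, ?_⟩
    have hcs := hk.choose_spec
    rw [hφ]
    simp only [dif_pos hk]
    refine (hmemW n _ x).1 ?_
    rw [hcs]
    exact hfV
  refine ⟨ℱ, fun n => ⟨hℱsub n, hℱfin n⟩, ?_, ?_⟩
  · -- infinite
    rw [Set.infinite_coe_iff.symm]
    by_contra hfin
    rw [not_infinite_iff_finite] at hfin
    obtain ⟨b, hb⟩ := Finite.exists_infinite_fiber
      (fun n => (⟨⋃₀ ℱ n, mem_range_self n⟩ : ↥(Set.range fun n => ⋃₀ ℱ n)))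
    have hIinf : ((fun n => (⟨⋃₀ ℱ n, mem_range_self n⟩ : ↥(Set.range fun n => ⋃₀ ℱ n))) ⁻¹' {b}).Infinite :=
      Set.infinite_coe_iff.1 hb
    have hSuniv : (b : Set X) = univ := by
      ext x
      simp only [mem_univ, iff_true]
      obtain ⟨M, hM⟩ := eventually_atTop.1 (hevX x)
      obtain ⟨n, hn, hnM⟩ := hIinf.exists_gt M
      have : ⋃₀ ℱ n = (b : Set X) := congrArg Subtype.val hn
      exact this ▸ hM n hnM.le
    obtain ⟨n, hn, _⟩ := hIinf.exists_gt 0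
    have hbn : ⋃₀ ℱ n = (b : Set X) := congrArg Subtype.val hn
    exact (h n).2.2.2 ⟨ℱ n, hℱsub n, hℱfin n, hbn.trans hSuniv⟩
  · -- finitely many misses
    intro x
    have hfin : {n | x ∉ ⋃₀ ℱ n}.Finite := by
      have := hevX x
      rw [← Nat.cofinite_eq_atTop] at this
      exact this
    refine (hfin.image fun n => ⋃₀ ℱ n).subset ?_
    rintro V ⟨⟨n, rfl⟩, hxV⟩
    exact ⟨n, hxV, rfl⟩

/-- `X` is projectively Hurewicz iff `X` satisfies
`U_fin(𝒪^ω_cz, Γ)`. -/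
theorem projHurewicz_iff_Ufin_cozero (X : Type*) [TopologicalSpace X] [T35Space X] :
    ProjHurewicz X ↔
      ∀ 𝒰 : ℕ → Set (Set X),
        (∀ n, (𝒰 n).Countable ∧ (∀ V ∈ 𝒰 n, IsCozero V) ∧ ⋃₀ 𝒰 n = Set.univ ∧
          ¬ ∃ 𝒢 ⊆ 𝒰 n, 𝒢.Finite ∧ ⋃₀ 𝒢 = Set.univ) →
        ∃ ℱ : ℕ → Set (Set X), (∀ n, ℱ n ⊆ 𝒰 n ∧ (ℱ n).Finite) ∧
          IsGammaCover (Set.range fun n => ⋃₀ ℱ n) :=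
  ⟨fun hP => fwd hP, fun h => bwd h⟩
end

section
/- A Tychonoff space X is Hurewicz if and only if X is Lindelöf and projectively Hurewicz. -/
open Set Filter Topology

section AuxHurewicz

lemma Hurewicz.image {X Y : Type*} [TopologicalSpace X] [TopologicalSpace Y]
    (hX : Hurewicz X) {g : X → Y} (hc : Continuous g) (hs : Function.Surjective g) :
    Hurewicz Y := by
  intro 𝒰 h𝒰
  obtain ⟨𝒱', h𝒱'sub, h𝒱'⟩ := hX (fun n => (g ⁻¹' ·) '' 𝒰 n) (by
    intro n
    refine ⟨?_, ?_⟩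
    · rintro V ⟨U, hU, rfl⟩; exact ((h𝒰 n).1 U hU).preimage hc
    · rw [sUnion_image, ← preimage_iUnion₂, ← sUnion_eq_biUnion, (h𝒰 n).2,
        preimage_univ])
  refine ⟨fun n => {U ∈ 𝒰 n | g ⁻¹' U ∈ 𝒱' n}, fun n => ⟨fun U hU => hU.1, ?_⟩, ?_⟩
  · have hinj : Function.Injective (fun U : Set Y => g ⁻¹' U) :=
      Set.preimage_injective.mpr hs
    exact (((h𝒱'sub n).2).preimage (hinj.injOn)).subset (fun U hU => hU.2)
  · intro y
    obtain ⟨x, rfl⟩ := hs y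
    filter_upwards [h𝒱' x] with n hn
    obtain ⟨W, hW, hxW⟩ := hn
    obtain ⟨U, hU, rfl⟩ := (h𝒱'sub n).1 hW
    exact ⟨U, ⟨hU, hW⟩, hxW⟩

lemma Hurewicz.lindelofSpace' {X : Type*} [TopologicalSpace X] (hX : Hurewicz X) :
    LindelofSpace X := by
  constructor
  rw [isLindelof_iff_countable_subcover]
  intro ι U hUopen hUcov
  rcases isEmpty_or_nonempty ι with hι | hι
  · refine ⟨∅, countable_empty, fun x hx => ?_⟩
    obtain ⟨i, -⟩ := mem_iUnion.mp (hUcov hx)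
    exact (IsEmpty.false i).elim
  obtain ⟨𝒱, h𝒱sub, h𝒱⟩ := hX (fun _ => Set.range U) (by
    intro n
    refine ⟨by rintro V ⟨i, rfl⟩; exact hUopen i, ?_⟩
    rw [sUnion_range]
    exact univ_subset_iff.mp hUcov)
  classical
  set pick : Set X → ι := fun V => if h : ∃ i, U i = V then h.choose else Classical.arbitrary ι with hpick
  refine ⟨⋃ n, pick '' 𝒱 n, countable_iUnion (fun n => ((h𝒱sub n).2.image _).countable), ?_⟩
  intro x _
  obtain ⟨n, hn⟩ := (h𝒱 x).exists
  obtain ⟨V, hV, hxV⟩ := hn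
  have hVr : ∃ i, U i = V := (h𝒱sub n).1 hV
  have hU : U (pick V) = V := by rw [hpick]; simp only [dif_pos hVr]; exact hVr.choose_spec
  exact mem_iUnion₂.mpr ⟨pick V, mem_iUnion.mpr ⟨n, mem_image_of_mem _ hV⟩, by rw [hU]; exact hxV⟩

/-- Cozero refinement step. -/
lemma cozero_refine' {X : Type*} [TopologicalSpace X] [T35Space X]
    [Nonempty X] [LindelofSpace X] (𝒰 : Set (Set X))
    (ho : ∀ V ∈ 𝒰, IsOpen V) (hc : ⋃₀ 𝒰 = Set.univ) :
    ∃ (h : ℕ → X → ℝ) (r : ℕ → Set X),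
      (∀ k, Continuous (h k)) ∧ (∀ k, r k ∈ 𝒰) ∧
      (∀ k, (h k) ⁻¹' {0}ᶜ ⊆ r k) ∧ (⋃ k, (h k) ⁻¹' {0}ᶜ) = univ := by
  have hex : ∀ x : X, ∃ (V : Set X) (φ : X → ℝ), V ∈ 𝒰 ∧ Continuous φ ∧
      φ ⁻¹' {0}ᶜ ⊆ V ∧ x ∈ φ ⁻¹' {0}ᶜ := by
    intro x
    have hx : x ∈ ⋃₀ 𝒰 := hc.symm ▸ mem_univ x
    obtain ⟨V, hV, hxV⟩ := hx
    obtain ⟨g, hg, hgx, hg1⟩ := CompletelyRegularSpace.completely_regular x Vᶜ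
      (isClosed_compl_iff.mpr (ho V hV)) (by simpa)
    refine ⟨V, fun z => (g z : ℝ) - 1, hV, by continuity, ?_, ?_⟩
    · intro z hz
      by_contra hzV
      have h1 : g z = 1 := hg1 hzV
      apply hz
      simp [h1]
    · simp [hgx]
  choose V φ hV hφc hφsub hφmem using hex
  obtain ⟨r, hrc, hrcov⟩ := isLindelof_univ.elim_countable_subcover
    (fun x => φ x ⁻¹' {0}ᶜ)
    (fun x => (isClosed_singleton.isOpen_compl).preimage (hφc x))
    (fun x _ => mem_iUnion.mpr ⟨x, hφmem x⟩)
  have hrne : r.Nonempty := by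
    rcases r.eq_empty_or_nonempty with h | h
    · exfalso
      obtain ⟨x⟩ := ‹Nonempty X›
      have := hrcov (mem_univ x)
      simp [h] at this
    · exact h
  obtain ⟨e, he⟩ := hrc.exists_eq_range hrne
  refine ⟨fun k => φ (e k), fun k => V (e k), fun k => hφc _, fun k => hV _,
    fun k => hφsub _, ?_⟩
  apply eq_univ_of_univ_subset
  intro x hx
  have := hrcov hx
  rw [he] at this
  obtain ⟨_, ⟨⟨k, rfl⟩, hk⟩⟩ := mem_iUnion₂.mp this
  exact mem_iUnion.mpr ⟨k, hk⟩

lemma hurewicz_of_lindelof_projHurewicz {X : Type*} [TopologicalSpace X] [T35Space X]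
    (hL : LindelofSpace X) (hP : ProjHurewicz X) : Hurewicz X := by
  classical
  rcases isEmpty_or_nonempty X with hE | hNE
  · intro 𝒰 _
    exact ⟨fun _ => ∅, fun n => ⟨empty_subset _, finite_empty⟩,
      fun x => (IsEmpty.false x).elim⟩
  intro 𝒰 h𝒰
  have step1 := fun n => cozero_refine' (𝒰 n) (h𝒰 n).1 (h𝒰 n).2
  choose hf rmap hcont hrmem hsub hcov using step1
  set F : X → (ℕ × ℕ → ℝ) := fun x p => hf p.1 p.2 x with hF
  have hFc : Continuous F := continuous_pi fun p => hcont p.1 p.2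
  set Y : Type := ↥(Set.range F) with hY
  set f : X → Y := fun x => ⟨F x, mem_range_self x⟩ with hfdef
  have hfc : Continuous f := hFc.subtype_mk _
  have hfs : Function.Surjective f := by
    rintro ⟨y, x, rfl⟩; exact ⟨x, rfl⟩
  have hHY : Hurewicz Y := hP Y inferInstance inferInstance f hfc hfs
  set S : ℕ → ℕ → Set Y := fun n k => {y : Y | (y : ℕ × ℕ → ℝ) (n, k) ≠ 0} with hS
  obtain ⟨𝒲, h𝒲sub, h𝒲⟩ := hHY (fun n => Set.range (S n)) (by
    intro n
    constructor
    · rintro W ⟨k, rfl⟩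
      exact (isClosed_singleton.isOpen_compl).preimage
        ((continuous_apply (n, k)).comp continuous_subtype_val)
    · apply eq_univ_of_univ_subset
      rintro ⟨y, x, rfl⟩ -
      have hx : x ∈ ⋃ k, (hf n k) ⁻¹' {0}ᶜ := (hcov n).symm ▸ mem_univ x
      obtain ⟨k, hk⟩ := mem_iUnion.mp hx
      exact ⟨S n k, ⟨k, rfl⟩, hk⟩)
  set idx : ℕ → Set Y → ℕ := fun n w => if h : ∃ k, S n k = w then h.choose else 0
    with hidx
  refine ⟨fun n => (fun w => rmap n (idx n w)) '' 𝒲 n,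
    fun n => ⟨?_, (h𝒲sub n).2.image _⟩, ?_⟩
  · rintro U ⟨w, -, rfl⟩; exact hrmem n _
  · intro x
    filter_upwards [h𝒲 (f x)] with n hn
    obtain ⟨w, hw, hxw⟩ := hn
    have hk : ∃ k, S n k = w := (h𝒲sub n).1 hw
    have hSk : S n (idx n w) = w := by
      rw [hidx]; simp only [dif_pos hk]; exact hk.choose_spec
    refine ⟨rmap n (idx n w), mem_image_of_mem _ hw, hsub n (idx n w) ?_⟩
    have : f x ∈ S n (idx n w) := hSk.symm ▸ hxw
    exact this

end AuxHurewicz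

/-- A Tychonoff space is Hurewicz iff it is Lindelöf and
projectively Hurewicz. -/
theorem hurewicz_iff_lindelof_projHurewicz (X : Type*) [TopologicalSpace X] [T35Space X] :
    Hurewicz X ↔ LindelofSpace X ∧ ProjHurewicz X := by
  constructor
  · intro hH
    exact ⟨hH.lindelofSpace', fun Y _ _ _ f hf hfs => hH.image hf hfs⟩
  · rintro ⟨hL, hP⟩
    exact hurewicz_of_lindelof_projHurewicz hL hP
end

section
/- For a Tychonoff space X, every Lindelöf continuous image of X is Hurewicz if and only if every separable metrizable continuous image of X is Hurewicz. -/
open Set Filter Topology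

/-- Every Lindelöf continuous image of `X` is Hurewicz iff every
separable metrizable continuous image of `X` is Hurewicz. -/
theorem lindelof_images_iff_sepMetr_images (X : Type*) [TopologicalSpace X] [T35Space X] :
    (∀ (Y : Type) [TopologicalSpace Y], T35Space Y → LindelofSpace Y →
        ∀ f : X → Y, Continuous f → Function.Surjective f → Hurewicz Y) ↔
      ProjHurewicz X := by
  constructor
  · intro H Y _ hm hs f hf hfs
    haveI := hm; haveI := hs
    letI := TopologicalSpace.metrizableSpaceMetric Y
    haveI : SecondCountableTopology Y := UniformSpace.secondCountable_of_separable Y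
    exact H Y inferInstance inferInstance f hf hfs
  · intro hp Y _ hT hL f hf hfs
    haveI := hT; haveI := hL
    intro 𝒰 h𝒰
    rcases isEmpty_or_nonempty Y with hY | hY
    · exact ⟨fun _ => ∅, fun n => ⟨empty_subset _, finite_empty⟩, fun y => (hY.false y).elim⟩
    -- Step 1 : cozero refinement pointwise
    have step1 : ∀ n (y : Y), ∃ (r : Y → ℝ) (U : Set Y), Continuous r ∧ U ∈ 𝒰 n ∧
        r y ≠ 0 ∧ (r ⁻¹' {0}ᶜ : Set Y) ⊆ U := by
      intro n y
      have hy : y ∈ ⋃₀ 𝒰 n := by rw [(h𝒰 n).2]; trivial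
      obtain ⟨U, hU, hyU⟩ := hy
      obtain ⟨g, hg, hg0, hg1⟩ := CompletelyRegularSpace.completely_regular y Uᶜ
        ((h𝒰 n).1 U hU).isClosed_compl (by simpa using hyU)
      refine ⟨fun z => 1 - (g z : ℝ), U, continuous_const.sub (continuous_subtype_val.comp hg), hU, by simp [hg0], ?_⟩
      intro z hz
      by_contra hzU
      have : g z = 1 := hg1 hzU
      simp [this] at hz
    choose r Uc hrc hUc hry hrsub using step1
    -- Step 2 : Lindelof, countable subcover of the cozero cover
    have step2 : ∀ n, ∃ e : ℕ → Y, ∀ y : Y, ∃ k, r n (e k) y ≠ 0 := by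
      intro n
      have hcov : (univ : Set Y) ⊆ ⋃ y : Y, (r n y ⁻¹' {0}ᶜ) := by
        intro z _
        exact mem_iUnion.2 ⟨z, by simpa using hry n z⟩
      obtain ⟨t, htc, hts⟩ := isLindelof_univ.elim_countable_subcover
        (fun y : Y => r n y ⁻¹' {0}ᶜ)
        (fun y => (isOpen_compl_singleton).preimage (hrc n y)) hcov
      have htne : t.Nonempty := by
        rcases hY with ⟨y0⟩
        rcases mem_iUnion₂.1 (hts (mem_univ y0)) with ⟨w, hw, _⟩
        exact ⟨w, hw⟩
      obtain ⟨e, he⟩ := htc.exists_eq_range htne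
      refine ⟨e, fun y => ?_⟩
      rcases mem_iUnion₂.1 (hts (mem_univ y)) with ⟨w, hw, hyw⟩
      rw [he] at hw
      rcases hw with ⟨k, rfl⟩
      exact ⟨k, by simpa using hyw⟩
    choose e he using step2
    -- the combined map into ℝ^(ℕ×ℕ)
    set g : ℕ → ℕ → Y → ℝ := fun n k => r n (e n k) with hg
    set U : ℕ → ℕ → Set Y := fun n k => Uc n (e n k) with hUdef
    have hgc : ∀ n k, Continuous (g n k) := fun n k => hrc n (e n k)
    have hgU : ∀ n k, U n k ∈ 𝒰 n := fun n k => hUc n (e n k)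
    have hgsub : ∀ n k (y : Y), g n k y ≠ 0 → y ∈ U n k := fun n k y h =>
      hrsub n (e n k) (by simpa using h)
    have hgcov : ∀ n (y : Y), ∃ k, g n k y ≠ 0 := fun n y => he n y
    set h : Y → (ℕ × ℕ → ℝ) := fun y p => g p.1 p.2 y with hh
    have hhc : Continuous h := continuous_pi fun p => hgc p.1 p.2
    set Z : Type := ↥(Set.range h) with hZ
    haveI : TopologicalSpace.MetrizableSpace Z := inferInstance
    haveI : TopologicalSpace.SeparableSpace Z := inferInstance
    set f' : X → Z := fun x => ⟨h (f x), mem_range_self _⟩ with hf'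
    have hf'c : Continuous f' := Continuous.subtype_mk (hhc.comp hf) _
    have hf's : Function.Surjective f' := by
      rintro ⟨z, y, rfl⟩
      rcases hfs y with ⟨x, rfl⟩
      exact ⟨x, rfl⟩
    -- covers of Z
    set O : ℕ → ℕ → Set Z := fun n k => {z : Z | (z : ℕ × ℕ → ℝ) (n, k) ≠ 0} with hO
    have hOopen : ∀ n k, IsOpen (O n k) := by
      intro n k
      exact (isOpen_compl_singleton.preimage (continuous_apply (n, k))).preimage
        continuous_subtype_val
    have hWcov : ∀ n, (∀ V ∈ range (O n), IsOpen V) ∧ ⋃₀ range (O n) = univ := by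
      intro n
      constructor
      · rintro V ⟨k, rfl⟩; exact hOopen n k
      · apply eq_univ_of_forall
        rintro ⟨z, y, rfl⟩
        rcases hgcov n y with ⟨k, hk⟩
        exact ⟨O n k, ⟨k, rfl⟩, hk⟩
    obtain ⟨𝒱', h𝒱'1, h𝒱'2⟩ := hp Z inferInstance inferInstance f' hf'c hf's
      (fun n => range (O n)) hWcov
    -- translate back
    classical
    set idx : ℕ → Set Z → ℕ := fun n V => if hex : ∃ k, O n k = V then hex.choose else 0 with hidx
    refine ⟨fun n => (fun V => U n (idx n V)) '' 𝒱' n, fun n => ⟨?_, ((h𝒱'1 n).2).image _⟩, ?_⟩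
    · rintro _ ⟨V, _, rfl⟩
      exact hgU n _
    · intro y
      refine (h𝒱'2 ⟨h y, mem_range_self y⟩).mono ?_
      rintro n ⟨V, hV, hzV⟩
      have hVr : V ∈ range (O n) := (h𝒱'1 n).1 hV
      have hex : ∃ k, O n k = V := hVr
      have hOV : O n (idx n V) = V := by rw [hidx]; simp only [dif_pos hex]; exact hex.choose_spec
      refine ⟨U n (idx n V), ⟨V, hV, rfl⟩, ?_⟩
      apply hgsub
      rw [← hOV] at hzV
      exact hzV
end

section
/- Let X be Tychonoff. If C_p(X) satisfies S_fin(Γ_𝟎, wΓ_𝟎), then X satisfies S_fin(Γ_F, Ω^gr). -/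
open Set Filter Topology

namespace SfinAux

variable {α : Type*}

noncomputable def pickSeq (A : ℕ → Set α)
    (hA : ∀ n (s : Set α), s.Finite → ∃ x ∈ A n, x ∉ s) : ℕ → α
  | p =>
    Classical.choose (hA (Nat.unpair p).1
      ((fun q : Fin p => pickSeq A hA q.1) '' Set.univ)
      (Set.finite_univ.image _))
termination_by p => p
decreasing_by all_goals exact q.2

theorem pickSeq_spec (A : ℕ → Set α)
    (hA : ∀ n (s : Set α), s.Finite → ∃ x ∈ A n, x ∉ s) (p : ℕ) :
    pickSeq A hA p ∈ A (Nat.unpair p).1 ∧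
      pickSeq A hA p ∉ ((fun q : Fin p => pickSeq A hA q.1) '' Set.univ) := by
  rw [pickSeq]
  exact Classical.choose_spec (hA (Nat.unpair p).1
    ((fun q : Fin p => pickSeq A hA q.1) '' Set.univ) (Set.finite_univ.image _))

theorem pickSeq_injective (A : ℕ → Set α)
    (hA : ∀ n (s : Set α), s.Finite → ∃ x ∈ A n, x ∉ s) :
    Function.Injective (pickSeq A hA) := by
  intro p q hpq
  rcases lt_trichotomy p q with h | h | h
  · exact absurd (show pickSeq A hA q ∈ ((fun q' : Fin q => pickSeq A hA q'.1) '' Set.univ) from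
      ⟨⟨p, h⟩, mem_univ _, hpq⟩) (pickSeq_spec A hA q).2
  · exact h
  · exact absurd (show pickSeq A hA p ∈ ((fun q' : Fin p => pickSeq A hA q'.1) '' Set.univ) from
      ⟨⟨q, h⟩, mem_univ _, hpq.symm⟩) (pickSeq_spec A hA p).2

end SfinAux

/-- If `C_p(X)` satisfies `S_fin(Γ_𝟎, wΓ_𝟎)` then `X` satisfies
`S_fin(Γ_F, Ω^gr)`. -/
theorem Sfin_Cp_implies_Sfin_X (X : Type*) [TopologicalSpace X] [T35Space X]
    (h : SfinGammaWGamma (zeroCp X)) : SfinGammaFOmegaGr X := by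
  intro 𝒰 hU
  -- extract the shrinking maps
  have hex : ∀ n, ∃ F : Set X → Set X, (∀ V ∈ 𝒰 n, IsZeroSet (F V) ∧ F V ⊆ V) ∧
      (F '' 𝒰 n).Infinite ∧ ∀ x : X, {V ∈ 𝒰 n | x ∉ F V}.Finite := fun n => (hU n).2.2.2
  choose F hF1 hF2 hF3 using hex
  -- remove members whose zero-shrink is everything
  set 𝒰'' : ℕ → Set (Set X) := fun n => {V ∈ 𝒰 n | F n V ≠ univ} with h𝒰''
  have h''inf : ∀ n, (𝒰'' n).Infinite := by
    intro n
    have hsub : (F n '' 𝒰 n) \ {univ} ⊆ F n '' (𝒰'' n) := by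
      rintro y ⟨⟨V, hV, rfl⟩, hy⟩
      exact ⟨V, ⟨hV, by simpa using hy⟩, rfl⟩
    exact Set.Infinite.of_image (F n) (((hF2 n).diff (finite_singleton _)).mono hsub)
  have hA' : ∀ n (s : Set (Set X)), s.Finite → ∃ x ∈ 𝒰'' n, x ∉ s := by
    intro n s hs
    obtain ⟨x, hx⟩ := ((h''inf n).diff hs).nonempty
    exact ⟨x, hx.1, hx.2⟩
  -- pairwise disjoint infinite subfamilies
  set pk : ℕ → Set X := SfinAux.pickSeq 𝒰'' hA' with hpk
  set 𝒰s : ℕ → Set (Set X) := fun n => Set.range fun k => pk (Nat.pair n k) with h𝒰s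
  have hsub'' : ∀ n, 𝒰s n ⊆ 𝒰'' n := by
    rintro n V ⟨k, rfl⟩
    have := (SfinAux.pickSeq_spec 𝒰'' hA' (Nat.pair n k)).1
    rwa [Nat.unpair_pair] at this
  have hsubU : ∀ n, 𝒰s n ⊆ 𝒰 n := fun n V hV => (hsub'' n hV).1
  have hsinf : ∀ n, (𝒰s n).Infinite := by
    intro n
    apply Set.infinite_range_of_injective
    intro k j hkj
    exact (Nat.pair_eq_pair.mp (SfinAux.pickSeq_injective 𝒰'' hA' hkj)).2
  have hdisj : ∀ n m, n ≠ m → Disjoint (𝒰s n) (𝒰s m) := by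
    intro n m hnm
    rw [Set.disjoint_left]
    rintro V ⟨k, rfl⟩ ⟨j, hj⟩
    exact hnm (Nat.pair_eq_pair.mp (SfinAux.pickSeq_injective 𝒰'' hA' hj)).1.symm
  -- the functions separating the zero-shrink from the complement
  have hΦex : ∀ n (V : Set X), ∃ b : Cp X, V ∈ 𝒰s n →
      ({x | b.1 x ≠ 1} = V ∧ b.1 ⁻¹' {0} = F n V) := by
    intro n V
    by_cases hV : V ∈ 𝒰s n
    · have hVU : V ∈ 𝒰 n := hsubU n hV
      obtain ⟨g, hgc, hgF⟩ := (hF1 n V hVU).1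
      have hFV : F n V ⊆ V := (hF1 n V hVU).2
      obtain ⟨f, hfc, hfV⟩ := (hU n).2.1 V hVU
      have hmemV : ∀ x, x ∈ V ↔ f x ≠ 0 := by
        intro x; rw [hfV]; simp
      have hmemF : ∀ x, x ∈ F n V ↔ g x = 0 := by
        intro x; rw [hgF]; simp
      have hd : ∀ x, 0 < |g x| + |f x| := by
        intro x
        rcases eq_or_ne (f x) 0 with hf0 | hf0
        · have hxV : x ∉ V := fun hxV => ((hmemV x).mp hxV) hf0
          have : g x ≠ 0 := fun hg0 => hxV (hFV ((hmemF x).mpr hg0))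
          have h1 : 0 < |g x| := abs_pos.mpr this
          have h2 : 0 ≤ |f x| := abs_nonneg _
          linarith
        · have h1 : 0 < |f x| := abs_pos.mpr hf0
          have h2 : 0 ≤ |g x| := abs_nonneg _
          linarith
      refine ⟨⟨fun x => |g x| / (|g x| + |f x|), ?_⟩, fun _ => ⟨?_, ?_⟩⟩
      · exact hgc.abs.div (hgc.abs.add hfc.abs) fun x => (hd x).ne'
      · ext x
        simp only [mem_setOf_eq]
        rw [ne_eq, div_eq_one_iff_eq (hd x).ne']
        constructor
        · intro hne
          rw [hmemV]
          intro hf0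
          exact hne (by rw [hf0]; simp)
        · intro hxV heq
          have : |f x| = 0 := (left_eq_add.mp heq)
          exact ((hmemV x).mp hxV) (abs_eq_zero.mp this)
      · ext x
        simp only [mem_preimage, mem_singleton_iff]
        rw [div_eq_zero_iff]
        constructor
        · rintro (h0 | h0)
          · exact (hmemF x).mpr (abs_eq_zero.mp h0)
          · exact absurd h0 (hd x).ne'
        · intro hxF
          left
          rw [abs_eq_zero]
          exact (hmemF x).mp hxF
    · exact ⟨zeroCp X, fun hc => absurd hc hV⟩
  choose Φ hΦ using hΦex
  set U : Cp X → Set X := fun b => {x | b.1 x ≠ 1} with hUdef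
  have hUΦ : ∀ n V, V ∈ 𝒰s n → U (Φ n V) = V := fun n V hV => (hΦ n V hV).1
  have hΦ2 : ∀ n V, V ∈ 𝒰s n → (Φ n V).1 ⁻¹' {0} = F n V := fun n V hV => (hΦ n V hV).2
  have hΦinj : ∀ n, Set.InjOn (Φ n) (𝒰s n) := by
    intro n V hV V' hV' heq
    rw [← hUΦ n V hV, ← hUΦ n V' hV', heq]
  set A : ℕ → Set (Cp X) := fun n => Φ n '' (𝒰s n) with hAdef
  -- each A n converges to zero
  have hAΓ : ∀ n, GammaAt (zeroCp X) (A n) := by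
    intro n
    refine ⟨(hsinf n).image (hΦinj n), ?_, ?_⟩
    · rintro ⟨V, hV, heq⟩
      have h2 := hΦ2 n V hV
      rw [heq] at h2
      have : (zeroCp X).1 ⁻¹' {0} = (univ : Set X) := by
        ext x; simp [zeroCp]
      rw [this] at h2
      exact (hsub'' n hV).2 h2.symm
    · intro W hW
      have hW' : W ∈ comap Subtype.val (𝓝 ((zeroCp X) : X → ℝ)) := by
        rwa [← nhds_subtype_eq_comap]
      obtain ⟨T, hT, hTW⟩ := mem_comap.mp hW'
      rw [nhds_pi, Filter.mem_pi] at hT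
      obtain ⟨I, hIfin, t, ht, hIt⟩ := hT
      have hkey : A n \ W ⊆ Φ n '' {V ∈ 𝒰s n | ∃ x ∈ I, x ∉ F n V} := by
        rintro b ⟨⟨V, hV, rfl⟩, hbW⟩
        refine ⟨V, ⟨hV, ?_⟩, rfl⟩
        by_contra hno
        push_neg at hno
        apply hbW
        apply hTW
        apply hIt
        intro x hx
        have hx0 : (Φ n V).1 x = 0 := by
          have : x ∈ (Φ n V).1 ⁻¹' {0} := by rw [hΦ2 n V hV]; exact hno x hx
          simpa using this
        show (Φ n V).1 x ∈ t x
        rw [hx0]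
        exact mem_of_mem_nhds (ht x)
      refine Set.Finite.subset (Set.Finite.image _ ?_) hkey
      have : {V ∈ 𝒰s n | ∃ x ∈ I, x ∉ F n V} ⊆ ⋃ x ∈ I, {V ∈ 𝒰 n | x ∉ F n V} := by
        rintro V ⟨hV, x, hxI, hxF⟩
        exact mem_biUnion hxI ⟨hsubU n hV, hxF⟩
      exact Set.Finite.subset (hIfin.biUnion fun x _ => hF3 n x) this
  obtain ⟨B, hB, hWG⟩ := h A hAΓ
  obtain ⟨S, hS1, hS2, hS3, hS4⟩ := hWG
  -- the selected subfamilies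
  have hUB : ∀ n, U '' B n = {V ∈ 𝒰s n | Φ n V ∈ B n} := by
    intro n
    apply Subset.antisymm
    · rintro _ ⟨b, hb, rfl⟩
      obtain ⟨V, hV, rfl⟩ := (hB n).1 hb
      rw [hUΦ n V hV]
      exact ⟨hV, hb⟩
    · rintro V ⟨hV, hVB⟩
      exact ⟨Φ n V, hVB, hUΦ n V hV⟩
  have hSsub : ∀ k, S k ⊆ ⋃ n, A n := by
    intro k b hb
    have hb2 : b ∈ ⋃ j, S j := mem_iUnion.mpr ⟨k, hb⟩
    rw [hS2] at hb2
    obtain ⟨n, hn⟩ := mem_iUnion.mp hb2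
    exact mem_iUnion.mpr ⟨n, (hB n).1 hn⟩
  have hUinj : Set.InjOn U (⋃ n, A n) := by
    intro b hb b' hb' heq
    obtain ⟨n, hn⟩ := mem_iUnion.mp hb
    obtain ⟨V, hV, hbe⟩ := hn
    obtain ⟨m, hm⟩ := mem_iUnion.mp hb'
    obtain ⟨V', hV', hbe'⟩ := hm
    subst hbe
    subst hbe'
    have hVV' : V = V' := by
      rw [← hUΦ n V hV, ← hUΦ m V' hV']
      exact heq
    rcases eq_or_ne n m with rfl | hnm
    · rw [hVV']
    · exact absurd (hVV' ▸ hV') fun hc =>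
        (Set.disjoint_left.mp (hdisj n m hnm) hV) hc
  -- the eventual grouping property
  have hEv : ∀ Fs : Set X, Fs.Finite → ∀ᶠ k in atTop, ∃ Uu ∈ U '' S k, Fs ⊆ Uu := by
    intro Fs hFs
    have hop : IsOpen (⋂ x ∈ Fs, {b : Cp X | b.1 x ∈ Ioo (-1:ℝ) 1}) := by
      apply hFs.isOpen_biInter
      intro x _
      exact (isOpen_Ioo).preimage ((continuous_apply x).comp continuous_subtype_val)
    have hWnhd : (⋂ x ∈ Fs, {b : Cp X | b.1 x ∈ Ioo (-1:ℝ) 1}) ∈ 𝓝 (zeroCp X) := by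
      apply hop.mem_nhds
      apply mem_iInter₂.mpr
      intro x _
      show (zeroCp X).1 x ∈ Ioo (-1:ℝ) 1
      simp [zeroCp]
    obtain ⟨s, hs1, hs2⟩ := hS4 _ hWnhd
    filter_upwards [hs2] with k hk
    refine ⟨U (s k), mem_image_of_mem U (hs1 k), ?_⟩
    intro x hx
    have hmem : (s k).1 x ∈ Ioo (-1:ℝ) 1 := mem_iInter₂.mp hk x hx
    exact ne_of_lt hmem.2
  have hUnion : (⋃ k, U '' S k) = ⋃ n, {V ∈ 𝒰s n | Φ n V ∈ B n} := by
    rw [← image_iUnion, hS2, image_iUnion]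
    exact iUnion_congr hUB
  refine ⟨fun n => {V ∈ 𝒰s n | Φ n V ∈ B n}, fun n => ⟨?_, ?_⟩, ?_, ?_, ?_⟩
  · exact fun V hV => hsubU n hV.1
  · show ({V | V ∈ 𝒰s n ∧ Φ n V ∈ B n}).Finite
    rw [← hUB n]
    exact ((hB n).2).image U
  · -- members are open
    rintro V hV
    obtain ⟨n, hVn⟩ := mem_iUnion.mp hV
    obtain ⟨f, hfc, rfl⟩ := (hU n).2.1 V (hsubU n hVn.1)
    exact (isOpen_compl_singleton).preimage hfc
  · -- covers
    apply eq_univ_of_forall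
    intro x
    obtain ⟨k, Uu, hUu, hx⟩ := (hEv {x} (finite_singleton x)).exists
    refine ⟨Uu, ?_, hx rfl⟩
    rw [← hUnion]
    exact mem_iUnion.mpr ⟨k, hUu⟩
  · -- the grouping
    refine ⟨fun k => U '' S k, fun k => ⟨((hS1 k).1).image U, ((hS1 k).2).image U⟩,
      hUnion, ?_, hEv⟩
    intro k j hkj
    rw [Set.disjoint_left]
    rintro V ⟨b, hb, rfl⟩ ⟨b', hb', heq⟩
    have hbb' : b' = b := hUinj (hSsub j hb') (hSsub k hb) heq
    exact Set.disjoint_left.mp (hS3 k j hkj) hb (hbb' ▸ hb')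
end

section
/- Let X be Tychonoff. If X satisfies S_fin(Γ_F, Ω^gr), then C_p(X) satisfies S_fin(Γ_𝟎, wΓ_𝟎). -/
/-!
Shrink the sequences to pairwise disjoint countable ones. If infinitely many `A n` contain a
function with `|f| < 1/(n+1)` everywhere, these functions converge to `𝟎` and are selected one
at a time. Otherwise, from some level on, the sets `{|f| < 1/(n+1)}`, `f ∈ A n`, are proper
cozero sets; since `A n` converges to `𝟎` they form a γ-cover, shrunk by the zero-sets
`{|f| ≤ 1/(2(n+1))}`. Selecting from these covers by `S_fin(Γ_F, Ω^gr)` and pulling the sets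
back to functions, for large `k` a set in the `k`-th group that contains a finite `F ⊆ X` comes
from a late level, so its function is small on `F`.
-/

open Set Filter Topology

open Function

section

variable {α : Type*}

noncomputable def distinctChoice (s : ℕ → Set α) (hs : ∀ n, (s n).Infinite) (n : ℕ) : α :=
  ((hs n).sdiff (finite_range fun j : Fin n => distinctChoice s hs j)).nonempty.some

theorem distinctChoice_mem_sdiff (s : ℕ → Set α) (hs : ∀ n, (s n).Infinite) (n : ℕ) :
    distinctChoice s hs n ∈ s n \ range (fun j : Fin n => distinctChoice s hs j) := by
  rw [distinctChoice]
  exact Nonempty.some_mem _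

theorem exists_injective_forall_mem {s : ℕ → Set α} (hs : ∀ n, (s n).Infinite) :
    ∃ g : ℕ → α, Injective g ∧ ∀ n, g n ∈ s n := by
  refine ⟨distinctChoice s hs, fun m n hmn => ?_, fun n => (distinctChoice_mem_sdiff s hs n).1⟩
  by_contra hne
  rcases lt_or_gt_of_ne hne with h | h
  · exact (distinctChoice_mem_sdiff s hs n).2 ⟨⟨m, h⟩, hmn⟩
  · exact (distinctChoice_mem_sdiff s hs m).2 ⟨⟨n, h⟩, hmn.symm⟩

theorem exists_pairwise_disjoint_subsets {A : ℕ → Set α} (hA : ∀ n, (A n).Infinite) :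
    ∃ B : ℕ → Set α, (∀ n, B n ⊆ A n ∧ (B n).Countable ∧ (B n).Infinite) ∧
      Pairwise (Disjoint on B) := by
  obtain ⟨g, hg, hgA⟩ := exists_injective_forall_mem (s := fun m => A m.unpair.1) fun _ => hA _
  refine ⟨fun n => range fun k => g (Nat.pair n k), fun n => ⟨?_, countable_range _,
    infinite_range_of_injective fun k l hkl => (Nat.pair_eq_pair.mp (hg hkl)).2⟩, ?_⟩
  · rintro _ ⟨k, rfl⟩
    simpa using hgA (Nat.pair n k)
  · intro m n hmn
    refine disjoint_left.mpr ?_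
    rintro _ ⟨k, rfl⟩ ⟨l, hl⟩
    exact hmn (Nat.pair_eq_pair.mp (hg hl)).1.symm

theorem exists_selection_of_tail {P : Set α → Prop} {A : ℕ → Set α} (N : ℕ)
    (h : ∃ B : ℕ → Set α, (∀ n, B n ⊆ A (n + N) ∧ (B n).Finite) ∧ P (⋃ n, B n)) :
    ∃ B : ℕ → Set α, (∀ n, B n ⊆ A n ∧ (B n).Finite) ∧ P (⋃ n, B n) := by
  obtain ⟨B, hB, hP⟩ := h
  refine ⟨fun n => if N ≤ n then B (n - N) else ∅, fun n => ?_, ?_⟩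
  · dsimp only
    split_ifs with hn
    · simpa [Nat.sub_add_cancel hn] using hB (n - N)
    · exact ⟨empty_subset _, finite_empty⟩
  · convert hP using 1
    ext f
    simp only [mem_iUnion]
    constructor
    · rintro ⟨n, hn⟩
      split_ifs at hn
      exacts [⟨_, hn⟩, hn.elim]
    · rintro ⟨n, hn⟩
      exact ⟨n + N, by simpa using hn⟩

theorem eventually_disjoint_of_finite {P : ℕ → Set α}
    (hP : ∀ k l, k ≠ l → Disjoint (P k) (P l)) {T : Set α} (hT : T.Finite) :
    ∀ᶠ k in atTop, Disjoint (P k) T := by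
  have hpt : ∀ t ∈ T, ∀ᶠ k in atTop, t ∉ P k := fun t _ => by
    rw [← Nat.cofinite_eq_atTop, eventually_cofinite]
    simp only [not_not]
    exact Subsingleton.finite fun k hk l hl => by_contra fun h => disjoint_left.mp (hP k l h) hk hl
  filter_upwards [(eventually_all_finite hT).mpr hpt] with k hk
  exact disjoint_right.mpr hk

end

section

variable {X : Type*} [TopologicalSpace X]

theorem isCozero_setOf_lt {g : X → ℝ} (hg : Continuous g) (ε : ℝ) : IsCozero {x | g x < ε} :=
  ⟨fun x => min (g x - ε) 0, (hg.sub continuous_const).min continuous_const, by ext; simp⟩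

theorem isZeroSet_setOf_le {g : X → ℝ} (hg : Continuous g) (δ : ℝ) : IsZeroSet {x | g x ≤ δ} :=
  ⟨fun x => max (g x - δ) 0, (hg.sub continuous_const).max continuous_const, by ext; simp⟩

instance : Nonempty (Cp X) := ⟨zeroCp X⟩

def sublevel (ε : ℝ) (f : Cp X) : Set X := {x | |f.1 x| < ε}

theorem sublevel_mono {ε ε' : ℝ} (h : ε ≤ ε') (f : Cp X) : sublevel ε f ⊆ sublevel ε' f :=
  fun _ hx => lt_of_lt_of_le hx h

def nbhdOn (F : Set X) (ε : ℝ) : Set (Cp X) := {f | F ⊆ sublevel ε f}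

theorem hasBasis_nhds_zeroCp :
    (𝓝 (zeroCp X)).HasBasis (fun p : Set X × ℝ => p.1.Finite ∧ 0 < p.2)
      (fun p => nbhdOn p.1 p.2) := by
  rw [IsEmbedding.subtypeVal.nhds_eq_comap, zeroCp, nhds_pi]
  convert (HasBasis.pi_self (Metric.nhds_basis_ball (x := (0 : ℝ)))).comap Subtype.val using 1
  ext ⟨F, ε⟩ f
  simp [nbhdOn, sublevel, subset_def, Real.norm_eq_abs]

theorem nbhdOn_mem_nhds {F : Set X} (hF : F.Finite) {ε : ℝ} (hε : 0 < ε) :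
    nbhdOn F ε ∈ 𝓝 (zeroCp X) :=
  hasBasis_nhds_zeroCp.mem_of_mem (i := (F, ε)) ⟨hF, hε⟩

variable {A : Set (Cp X)} (hA : ∀ W ∈ 𝓝 (zeroCp X), (A \ W).Finite) {ε : ℝ}
include hA

theorem finite_setOf_notMem_of_sublevel_subset (hε : 0 < ε) {G : Cp X → Set X}
    (hG : ∀ f ∈ A, sublevel ε f ⊆ G f) (x : X) : {f ∈ A | x ∉ G f}.Finite :=
  (hA _ (nbhdOn_mem_nhds (finite_singleton x) hε)).subset
    fun f ⟨hf, hx⟩ => ⟨hf, fun hsmall : {x} ⊆ sublevel ε f => hx (hG f hf (hsmall rfl))⟩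

theorem infinite_image_of_sublevel_subset (hε : 0 < ε) (hAi : A.Infinite) {G : Cp X → Set X}
    (hG : ∀ f ∈ A, sublevel ε f ⊆ G f ∧ G f ≠ univ) : (G '' A).Infinite := by
  intro hfin
  have hpt : ∀ V ∈ G '' A, ∃ x, x ∉ V := by
    rintro _ ⟨f, hf, rfl⟩
    exact (ne_univ_iff_exists_notMem _).mp (hG f hf).2
  choose pt hpt using hpt
  refine hAi ((hA _ (nbhdOn_mem_nhds (hfin.dependent_image pt) hε)).subset
    fun f hf => ⟨hf, fun hsmall : {y | ∃ V hV, pt V hV = y} ⊆ sublevel ε f => ?_⟩)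
  have hV : G f ∈ G '' A := mem_image_of_mem G hf
  exact hpt _ hV ((hG f hf).1 (hsmall ⟨_, hV, rfl⟩))

theorem gammaFShrinkable_image_sublevel_of_injOn (hε : 0 < ε) (hAc : A.Countable)
    (hAi : A.Infinite) (hbig : ∀ f ∈ A, sublevel ε f ≠ univ) (hinj : InjOn (sublevel ε) A) :
    GammaFShrinkable (sublevel ε '' A) := by
  set Z : Cp X → Set X := fun f => {x | |f.1 x| ≤ ε / 2}
  have hZ : ∀ f, sublevel (ε / 2) f ⊆ Z f ∧ Z f ⊆ sublevel ε f := fun f =>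
    ⟨fun x (hx : |f.1 x| < ε / 2) => hx.le,
      fun x (hx : |f.1 x| ≤ ε / 2) => hx.trans_lt (half_lt_self hε)⟩
  have hsec : EqOn ((Z ∘ invFunOn (sublevel ε) A) ∘ sublevel ε) Z A := fun f hf => by
    simp only [comp_apply, hinj.leftInvOn_invFunOn hf]
  have hsep : ∀ (p : Set X → Prop), {V ∈ sublevel ε '' A | p V} ⊆
      sublevel ε '' {f ∈ A | p (sublevel ε f)} := by
    rintro p _ ⟨⟨f, hf, rfl⟩, hp⟩
    exact ⟨f, ⟨hf, hp⟩, rfl⟩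
  refine ⟨hAc.image _, ?_, ⟨infinite_image_of_sublevel_subset hA hε hAi fun f hf =>
    ⟨subset_rfl, hbig f hf⟩, fun x => ?_⟩, Z ∘ invFunOn (sublevel ε) A, ?_, ?_, fun x => ?_⟩
  · rintro _ ⟨f, -, rfl⟩
    exact isCozero_setOf_lt (continuous_abs.comp f.2) ε
  · exact ((finite_setOf_notMem_of_sublevel_subset hA hε (fun _ _ => subset_rfl) x).image
      _).subset (hsep _)
  · rintro _ ⟨f, hf, rfl⟩
    rw [← comp_apply (f := Z ∘ _), hsec hf]
    exact ⟨isZeroSet_setOf_le (continuous_abs.comp f.2) _, (hZ f).2⟩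
  · rw [← image_comp, hsec.image_eq]
    exact infinite_image_of_sublevel_subset hA (half_pos hε) hAi fun f hf =>
      ⟨(hZ f).1, fun h => hbig f hf (eq_univ_of_subset (hZ f).2 h)⟩
  · refine ((finite_setOf_notMem_of_sublevel_subset hA (half_pos hε)
      (fun f _ => (hZ f).1) x).image (sublevel ε)).subset ?_
    refine (hsep _).trans (image_mono fun f ⟨hf, hx⟩ => ⟨hf, ?_⟩)
    rwa [← comp_apply (f := Z ∘ _), hsec hf] at hx

theorem gammaFShrinkable_image_sublevel (hε : 0 < ε) (hAc : A.Countable) (hAi : A.Infinite)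
    (hbig : ∀ f ∈ A, sublevel ε f ≠ univ) : GammaFShrinkable (sublevel ε '' A) := by
  obtain ⟨A₀, hA₀A, hbij⟩ := exists_subset_bijOn A (sublevel ε)
  rw [← hbij.image_eq]
  refine gammaFShrinkable_image_sublevel_of_injOn
    (fun W hW => (hA W hW).subset (sdiff_subset_sdiff_left hA₀A)) hε (hAc.mono hA₀A)
    (fun h => ?_) (fun f hf => hbig f (hA₀A hf)) hbij.injOn
  refine infinite_image_of_sublevel_subset hA hε hAi (fun f hf => ⟨subset_rfl, hbig f hf⟩) ?_
  rw [← hbij.image_eq]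
  exact h.image _

end

section

variable {X : Type*} [TopologicalSpace X]

theorem wGammaAt_image {β : Type*} {g : Cp X} {P : ℕ → Set β}
    (hP : ∀ k, (P k).Finite ∧ (P k).Nonempty) (hPdisj : ∀ k l, k ≠ l → Disjoint (P k) (P l))
    {φ : β → Cp X} (hφ : InjOn φ (⋃ k, P k))
    (hconv : ∀ W ∈ 𝓝 g, ∀ᶠ k in atTop, ∃ b ∈ P k, φ b ∈ W) :
    WGammaAt g (φ '' ⋃ k, P k) := by
  refine ⟨fun k => φ '' P k, fun k => ⟨(hP k).1.image φ, (hP k).2.image φ⟩, image_iUnion.symm,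
    fun k l hkl => disjoint_left.mpr ?_, fun W hW => ?_⟩
  · rintro _ ⟨b, hb, rfl⟩ ⟨c, hc, hcb⟩
    rw [hφ (mem_iUnion_of_mem l hc) (mem_iUnion_of_mem k hb) hcb] at hc
    exact disjoint_left.mp (hPdisj k l hkl) hb hc
  · have hpick : ∀ k, ∃ f ∈ φ '' P k, (∃ b ∈ P k, φ b ∈ W) → f ∈ W := fun k => by
      by_cases hk : ∃ b ∈ P k, φ b ∈ W
      · obtain ⟨b, hb, hbW⟩ := hk
        exact ⟨φ b, mem_image_of_mem φ hb, fun _ => hbW⟩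
      · obtain ⟨b, hb⟩ := (hP k).2
        exact ⟨φ b, mem_image_of_mem φ hb, fun h => absurd h hk⟩
    choose s hs hsW using hpick
    exact ⟨s, hs, (hconv W hW).mono hsW⟩

variable {A : ℕ → Set (Cp X)} (hdisj : Pairwise (Disjoint on A)) {ρ : ℕ → ℝ}
  (hρ : Tendsto ρ atTop (𝓝 0))
include hdisj hρ

theorem exists_selection_of_infinite_setOf_sublevel_eq_univ
    (hsmall : {n | ∃ f ∈ A n, sublevel (ρ n) f = univ}.Infinite) :
    ∃ B : ℕ → Set (Cp X), (∀ n, B n ⊆ A n ∧ (B n).Finite) ∧ WGammaAt (zeroCp X) (⋃ n, B n) := by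
  set I := {n | ∃ f ∈ A n, sublevel (ρ n) f = univ}
  choose! f hfA hfsmall using fun n (hn : n ∈ I) => hn
  set ν := Nat.nth (· ∈ I)
  have hνI : ⋃ k, {ν k} = I :=
    (iUnion_singleton_eq_range ν).trans (Nat.range_nth_of_infinite hsmall)
  refine ⟨fun n => f '' ({n} ∩ I),
    fun n => ⟨?_, ((finite_singleton n).inter_of_left I).image f⟩, ?_⟩
  · rintro _ ⟨m, ⟨rfl, hm⟩, rfl⟩
    exact hfA _ hm
  · rw [← image_iUnion, ← iUnion_inter, iUnion_singleton_eq_range, range_id', univ_inter, ← hνI]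
    refine wGammaAt_image (fun k => ⟨finite_singleton _, singleton_nonempty _⟩)
      (fun k l hkl => disjoint_singleton.mpr ((Nat.nth_injective hsmall).ne hkl)) ?_ ?_
    · refine InjOn.mono hνI.subset fun m hm n hn hmn => ?_
      by_contra hne
      exact disjoint_left.mp (hdisj hne) (hfA m hm) (hmn ▸ hfA n hn)
    · intro W hW
      obtain ⟨⟨F, ε⟩, ⟨-, hε⟩, hFW⟩ := hasBasis_nhds_zeroCp.mem_iff.mp hW
      have hν : Tendsto ν atTop atTop := (Nat.nth_strictMono hsmall).tendsto_atTop
      filter_upwards [(hρ.comp hν).eventually (gt_mem_nhds hε)] with k hk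
      refine ⟨ν k, rfl, hFW ?_⟩
      have hνk : ν k ∈ I := Nat.nth_mem_of_infinite hsmall k
      exact (subset_univ F).trans ((hfsmall _ hνk).symm.subset.trans (sublevel_mono hk.le _))

theorem exists_selection_of_forall_sublevel_ne_univ (h : SfinGammaFOmegaGr X)
    (hAc : ∀ n, (A n).Countable) (hAi : ∀ n, (A n).Infinite)
    (hA : ∀ n, ∀ W ∈ 𝓝 (zeroCp X), (A n \ W).Finite) (hρpos : ∀ n, 0 < ρ n)
    (hbig : ∀ n, ∀ f ∈ A n, sublevel (ρ n) f ≠ univ) :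
    ∃ B : ℕ → Set (Cp X), (∀ n, B n ⊆ A n ∧ (B n).Finite) ∧ WGammaAt (zeroCp X) (⋃ n, B n) := by
  obtain ⟨𝒱, h𝒱, -, -, P, hP, hPU, hPdisj, hPgr⟩ := h (fun n => sublevel (ρ n) '' A n)
    fun n => gammaFShrinkable_image_sublevel (hA n) (hρpos n) (hAc n) (hAi n) (hbig n)
  have hlift : ∀ V ∈ ⋃ n, 𝒱 n, ∃ m, V ∈ 𝒱 m ∧ ∃ f ∈ A m, sublevel (ρ m) f = V := by
    intro V hV
    obtain ⟨m, hm⟩ := mem_iUnion.mp hV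
    obtain ⟨f, hf, hfV⟩ := (h𝒱 m).1 hm
    exact ⟨m, hm, f, hf, hfV⟩
  choose! lvl hlvl φ hφA hφV using hlift
  have hφinj : InjOn φ (⋃ n, 𝒱 n) := by
    intro V hV V' hV' he
    have hl : lvl V = lvl V' := by
      by_contra hne
      exact disjoint_left.mp (hdisj hne) (hφA V hV) (he ▸ hφA V' hV')
    rw [← hφV V hV, ← hφV V' hV', he, hl]
  refine ⟨fun m => φ '' {V ∈ ⋃ n, 𝒱 n | lvl V = m}, fun m => ⟨?_, ?_⟩, ?_⟩
  · rintro _ ⟨V, ⟨hV, rfl⟩, rfl⟩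
    exact hφA V hV
  · refine ((h𝒱 m).2.subset ?_).image φ
    rintro V ⟨hV, rfl⟩
    exact hlvl V hV
  · have hB : ⋃ m, φ '' {V ∈ ⋃ n, 𝒱 n | lvl V = m} = φ '' ⋃ k, P k := by
      rw [← image_iUnion, hPU]
      congr 1
      ext V
      simp
    rw [hB]
    refine wGammaAt_image hP hPdisj (hPU ▸ hφinj) fun W hW => ?_
    obtain ⟨⟨F, ε⟩, ⟨hF, hε⟩, hFW⟩ := hasBasis_nhds_zeroCp.mem_iff.mp hW
    obtain ⟨N, hN⟩ := eventually_atTop.mp (hρ.eventually (gt_mem_nhds hε))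
    have hT : (⋃ m < N, 𝒱 m).Finite := (finite_lt_nat N).biUnion fun m _ => (h𝒱 m).2
    filter_upwards [eventually_disjoint_of_finite hPdisj hT, hPgr F hF] with k hk ⟨V, hVP, hFV⟩
    have hV : V ∈ ⋃ n, 𝒱 n := hPU ▸ mem_iUnion_of_mem k hVP
    have hNV : N ≤ lvl V := not_lt.mp fun hlt =>
      disjoint_left.mp hk hVP (mem_biUnion hlt (hlvl V hV))
    exact ⟨V, hVP, hFW <| hFV.trans <|
      (hφV V hV).symm.subset.trans (sublevel_mono (hN _ hNV).le _)⟩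

end

theorem Sfin_X_implies_Sfin_Cp_general (X : Type*) [TopologicalSpace X]
    (h : SfinGammaFOmegaGr X) : SfinGammaWGamma (zeroCp X) := by
  intro A hA
  obtain ⟨A', hA', hdisj⟩ := exists_pairwise_disjoint_subsets fun n => (hA n).1
  suffices ∃ B : ℕ → Set (Cp X), (∀ n, B n ⊆ A' n ∧ (B n).Finite) ∧
      WGammaAt (zeroCp X) (⋃ n, B n) by
    obtain ⟨B, hB, hBw⟩ := this
    exact ⟨B, fun n => ⟨(hB n).1.trans (hA' n).1, (hB n).2⟩, hBw⟩
  have hconv : ∀ n, ∀ W ∈ 𝓝 (zeroCp X), (A' n \ W).Finite := fun n W hW =>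
    ((hA n).2.2 W hW).subset (sdiff_subset_sdiff_left (hA' n).1)
  have hρ : Tendsto (fun n : ℕ => 1 / ((n : ℝ) + 1)) atTop (𝓝 0) :=
    tendsto_one_div_add_atTop_nhds_zero_nat
  by_cases hsmall : {n | ∃ f ∈ A' n, sublevel (1 / ((n : ℝ) + 1)) f = univ}.Infinite
  · exact exists_selection_of_infinite_setOf_sublevel_eq_univ hdisj hρ hsmall
  · obtain ⟨N, hN⟩ := (not_infinite.mp hsmall).bddAbove
    refine exists_selection_of_tail (N + 1) <| exists_selection_of_forall_sublevel_ne_univ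
      (hdisj.comp_of_injective (add_left_injective _)) (hρ.comp (tendsto_add_atTop_nat (N + 1))) h
      (fun _ => (hA' _).2.1) (fun _ => (hA' _).2.2) (fun _ => hconv _)
      (fun _ => Nat.one_div_pos_of_nat) fun n f hf hfu => ?_
    have := hN ⟨f, hf, hfu⟩
    omega

/-- If `X` satisfies `S_fin(Γ_F, Ω^gr)` then `C_p(X)` satisfies
`S_fin(Γ_𝟎, wΓ_𝟎)`. -/
theorem Sfin_X_implies_Sfin_Cp (X : Type*) [TopologicalSpace X] [T35Space X]
    (h : SfinGammaFOmegaGr X) : SfinGammaWGamma (zeroCp X) :=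
  Sfin_X_implies_Sfin_Cp_general X h
end

section
/- Let X be Tychonoff, let (f_j) be a sequence in C_p(X) converging pointwise to 𝟎, and fix i ∈ ℕ. Define V_j = f_j^{-1}((-1/i, 1/i)) and F_j = f_j^{-1}([-1/(i+1), 1/(i+1)]). Then {V_j : j ∈ ℕ} is a cozero γ_F-shrinkable cover of X (assuming no V_j equals X), witnessed by the zero-set γ-cover {F_j : j ∈ ℕ}. -/
open Set Filter Topology

/-- from a sequence in `C_p(X)` converging pointwise to `𝟎` and
`i ≥ 1`, the sets `V_j = f_j⁻¹((-1/i, 1/i))` form a cozero γ_F-shrinkable cover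
witnessed by the zero-set γ-cover `F_j = f_j⁻¹([-1/(i+1), 1/(i+1)])`. -/
theorem gammaF_cover_from_convergent_sequence (X : Type*) [TopologicalSpace X] [T35Space X]
    (f : ℕ → X → ℝ) (hf : ∀ j, Continuous (f j))
    (hconv : ∀ x : X, Filter.Tendsto (fun j => f j x) Filter.atTop (nhds 0))
    (i : ℕ) (hi : 1 ≤ i)
    (V : ℕ → Set X) (hV : ∀ j, V j = (f j) ⁻¹' Set.Ioo (-(1 / (i : ℝ))) (1 / (i : ℝ)))
    (F : ℕ → Set X)
    (hF : ∀ j, F j = (f j) ⁻¹' Set.Icc (-(1 / ((i : ℝ) + 1))) (1 / ((i : ℝ) + 1)))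
    (hproper : ∀ j, V j ≠ Set.univ) :
    (∀ j, IsCozero (V j)) ∧ (∀ j, IsZeroSet (F j)) ∧ (∀ j, F j ⊆ V j) ∧
      (∀ x : X, ∀ᶠ j in Filter.atTop, x ∈ F j) ∧ (⋃ j, V j) = Set.univ := by
  have hi0 : (0:ℝ) < (i:ℝ) := by exact_mod_cast Nat.pos_of_ne_zero (by omega)
  have hipos : (0:ℝ) < 1 / ((i:ℝ) + 1) := by positivity
  have hlt : 1 / ((i:ℝ) + 1) < 1 / (i:ℝ) := by
    apply one_div_lt_one_div_of_lt hi0; linarith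
  refine ⟨?_, ?_, ?_, ?_, ?_⟩
  · intro j
    refine ⟨fun x => max (1 / (i:ℝ) - |f j x|) 0, by fun_prop, ?_⟩
    rw [hV j]; ext x
    simp only [Set.mem_preimage, Set.mem_compl_iff, Set.mem_singleton_iff, Set.mem_Ioo]
    constructor
    · rintro ⟨h1, h2⟩
      have : |f j x| < 1 / (i:ℝ) := abs_lt.2 ⟨h1, h2⟩
      intro h; rw [max_eq_left (by linarith)] at h; linarith
    · intro h
      rcases le_or_gt (1 / (i:ℝ) - |f j x|) 0 with h'|h'
      · exact absurd (max_eq_right h') h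
      · exact abs_lt.1 (by linarith)
  · intro j
    refine ⟨fun x => max (|f j x| - 1 / ((i:ℝ) + 1)) 0, by fun_prop, ?_⟩
    rw [hF j]; ext x
    simp only [Set.mem_preimage, Set.mem_singleton_iff, Set.mem_Icc]
    constructor
    · rintro ⟨h1, h2⟩
      have : |f j x| ≤ 1 / ((i:ℝ) + 1) := abs_le.2 ⟨h1, h2⟩
      exact max_eq_right (by linarith)
    · intro h
      rcases le_or_gt (|f j x| - 1 / ((i:ℝ) + 1)) 0 with h'|h'
      · exact abs_le.1 (by linarith)
      · rw [max_eq_left h'.le] at h; linarith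
  · intro j x hx
    rw [hF j] at hx; rw [hV j]
    simp only [Set.mem_preimage, Set.mem_Icc] at hx
    simp only [Set.mem_preimage, Set.mem_Ioo]
    constructor <;> [linarith [hx.1]; linarith [hx.2]]
  · intro x
    have := (hconv x).eventually (eventually_abs_sub_lt 0 hipos)
    filter_upwards [this] with j hj
    rw [hF j]
    simp only [sub_zero] at hj
    simp only [Set.mem_preimage, Set.mem_Icc]
    exact abs_le.1 hj.le
  · ext x
    simp only [Set.mem_iUnion, Set.mem_univ, iff_true]
    have := (hconv x).eventually (eventually_abs_sub_lt 0 hipos)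
    rcases this.exists with ⟨j, hj⟩
    refine ⟨j, ?_⟩
    rw [hV j]
    simp only [sub_zero] at hj
    simp only [Set.mem_preimage, Set.mem_Ioo]
    have := abs_lt.1 hj
    constructor <;> [linarith [this.1]; linarith [this.2]]
end
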